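/- arXiv:2506.06319 — 6 statements merged into one kernel-verified Lean document; each statement's English description precedes it below -/
import Mathlib

section
/- Let F and G be continuous CDFs on [0,1] such that G is an MPC of F, and let 0 ≤ v₁ < v₂ ≤ 1 satisfy G(v₂) > G(v₁) and H(z) = ∫_0^z (F(v) − G(v)) dv > 0 for all z ∈ (v₁, v₂]. Then there exist v_l < v_h with [v_l, v_h] ⊆ [v₁, v₂] such that the function Ĝ defined by Ĝ(v) = G(v) for v < v_l, Ĝ(v) = (1/(v_h − v_l)) ∫_{v_l}^{v_h} G(t) dt for v ∈ [v_l, v_h), and Ĝ(v) = G(v) for v ≥ v_h is a CDF that is a mean-preserving spread of G and a mean-preserving contraction of F. -/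
open MeasureTheory Set

private lemma dInt_formula (G : ℝ → ℝ) (vl vh c : ℝ)
    (hvl : 0 < vl) (z : ℝ) (hz : 0 ≤ z) :
    ∫ t in (0:ℝ)..z, (Set.Ico vl vh).indicator (fun t => c - G t) t
      = ∫ t in vl..(max vl (min z vh)), (c - G t) := by
  have hvw : vl ≤ max vl (min z vh) := le_max_left _ _
  rw [intervalIntegral.integral_of_le hz, intervalIntegral.integral_of_le hvw]
  rw [MeasureTheory.setIntegral_indicator measurableSet_Ico]
  apply MeasureTheory.setIntegral_congr_set
  rw [MeasureTheory.ae_eq_set]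
  constructor
  · refine measure_mono_null (fun t ht => ?_) ((Set.finite_singleton vl).measure_zero _)
    simp only [Set.mem_inter_iff, Set.mem_Ioc, Set.mem_Ico, Set.mem_diff,
      Set.mem_singleton_iff] at ht ⊢
    obtain ⟨⟨⟨ht0, htz⟩, htl, hth⟩, hnot⟩ := ht
    by_contra hne
    exact hnot ⟨lt_of_le_of_ne htl (Ne.symm hne),
      le_max_of_le_right (le_min htz hth.le)⟩
  · refine measure_mono_null (fun t ht => ?_) ((Set.finite_singleton vh).measure_zero _)
    simp only [Set.mem_inter_iff, Set.mem_Ioc, Set.mem_Ico, Set.mem_diff,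
      Set.mem_singleton_iff] at ht ⊢
    obtain ⟨⟨hlt, htw⟩, hnot⟩ := ht
    have htm : t ≤ min z vh := by
      rcases max_cases vl (min z vh) with ⟨he, _⟩ | ⟨he, _⟩
      · rw [he] at htw; exact absurd htw (not_le.2 hlt)
      · rw [he] at htw; exact htw
    by_contra hne
    exact hnot ⟨⟨hvl.trans hlt, htm.trans (min_le_left _ _)⟩, hlt.le,
      lt_of_le_of_ne (htm.trans (min_le_right _ _)) hne⟩

/-- `G` is a mean-preserving contraction (MPC) of `F` on `[0,1]`:
`∫_0^z (F - G) ≥ 0` for all `z ∈ [0,1]` and `∫_0^1 (F - G) = 0`.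
Equivalently, `F` is a mean-preserving spread (MPS) of `G`. -/
def MPCof (G F : ℝ → ℝ) : Prop :=
  (∀ z ∈ Set.Icc (0 : ℝ) 1, 0 ≤ ∫ v in (0 : ℝ)..z, (F v - G v)) ∧
  (∫ v in (0 : ℝ)..1, (F v - G v)) = 0

/-- If `G` is an MPC of `F`, `G v₁ < G v₂`, and
`H(z) = ∫_0^z (F - G) > 0` on `(v₁, v₂]`, then there is a subinterval `[v_l, v_h]`
of `[v₁, v₂]` such that replacing `G` on `[v_l, v_h)` by the average of `G` over
`[v_l, v_h]` yields a CDF that is an MPS of `G` and an MPC of `F`. -/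
theorem stmt2 (F G : ℝ → ℝ)
    (hFc : Continuous F) (hGc : Continuous G) (hFm : Monotone F) (hGm : Monotone G)
    (hF0 : F 0 = 0) (hG0 : G 0 = 0) (hF1 : F 1 = 1) (hG1 : G 1 = 1)
    (hMPC : MPCof G F)
    (v₁ v₂ : ℝ) (h1 : 0 ≤ v₁) (h12 : v₁ < v₂) (h2 : v₂ ≤ 1)
    (hGv : G v₁ < G v₂)
    (hH : ∀ z ∈ Set.Ioc v₁ v₂, 0 < ∫ t in (0 : ℝ)..z, (F t - G t)) :
    ∃ vl vh : ℝ, v₁ ≤ vl ∧ vl < vh ∧ vh ≤ v₂ ∧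
      ∃ Ghat : ℝ → ℝ,
        (∀ v, v < vl → Ghat v = G v) ∧
        (∀ v, vl ≤ v → v < vh → Ghat v = (∫ t in vl..vh, G t) / (vh - vl)) ∧
        (∀ v, vh ≤ v → Ghat v = G v) ∧
        Monotone Ghat ∧ MPCof G Ghat ∧ MPCof Ghat F := by
  have hFG : Continuous fun v => F v - G v := hFc.sub hGc
  set H : ℝ → ℝ := fun z => ∫ t in (0:ℝ)..z, (F t - G t) with hHdef
  have hHcont : Continuous H :=
    intervalIntegral.continuous_primitive (fun a b => hFG.intervalIntegrable a b) 0
  set a := (v₁ + v₂) / 2 with hadef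
  have hav1 : v₁ < a := by rw [hadef]; linarith
  have hav2 : a < v₂ := by rw [hadef]; linarith
  have ha0 : 0 < a := lt_of_le_of_lt h1 hav1
  obtain ⟨zmin, hzmem, hzmin⟩ :=
    isCompact_Icc.exists_isMinOn (nonempty_Icc.2 hav2.le) hHcont.continuousOn
  set ε := H zmin with hεdef
  have hε : 0 < ε := hH zmin ⟨lt_of_lt_of_le hav1 hzmem.1, hzmem.2⟩
  set vl := a with hvldef
  set vh := min v₂ (a + ε) with hvhdef
  have hlh : vl < vh := lt_min hav2 (by linarith)
  have hhv2 : vh ≤ v₂ := min_le_left _ _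
  have hεbound : vh - vl ≤ ε := by
    have := min_le_right v₂ (a + ε); dsimp [vh, vl]; linarith
  have hvl0 : 0 < vl := ha0
  have hvl1 : vl ≤ 1 := by linarith
  have hvh1 : vh ≤ 1 := le_trans hhv2 h2
  have hlhpos : 0 < vh - vl := by linarith
  -- definitions
  set T := ∫ t in vl..vh, G t with hTdef
  set c := T / (vh - vl) with hcdef
  set d : ℝ → ℝ := (Set.Ico vl vh).indicator (fun t => c - G t) with hddef
  set Ghat : ℝ → ℝ := fun v => G v + d v with hGhatdef
  -- basic integrability
  have hdint : ∀ p q : ℝ, IntervalIntegrable d volume p q := by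
    intro p q
    constructor <;>
      exact ((continuous_const.sub hGc).integrableOn_Ioc).indicator measurableSet_Ico
  -- bounds on c
  have hTl : G vl * (vh - vl) ≤ T := by
    have := intervalIntegral.integral_mono_on hlh.le
      (intervalIntegrable_const (μ := volume) (c := G vl)) (hGc.intervalIntegrable vl vh)
      (fun x hx => hGm hx.1)
    simpa [mul_comm] using this
  have hTh : T ≤ G vh * (vh - vl) := by
    have := intervalIntegral.integral_mono_on hlh.le
      (hGc.intervalIntegrable vl vh) (intervalIntegrable_const (μ := volume) (c := G vh))
      (fun x hx => hGm hx.2)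
    simpa [mul_comm] using this
  have hcl : G vl ≤ c := by
    rw [hcdef, le_div_iff₀ hlhpos]; linarith
  have hch : c ≤ G vh := by
    rw [hcdef, div_le_iff₀ hlhpos]; linarith
  -- value of D on the pieces
  have hD0 : ∀ z : ℝ, 0 ≤ z → z ≤ vl → (∫ t in (0:ℝ)..z, d t) = 0 := by
    intro z hz0 hzl
    rw [hddef, dInt_formula G vl vh c hvl0 z hz0]
    have : max vl (min z vh) = vl := by
      rw [min_eq_left (hzl.trans hlh.le), max_eq_left hzl]
    rw [this, intervalIntegral.integral_same]
  have hDmid : ∀ z : ℝ, vl ≤ z → z ≤ vh →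
      (∫ t in (0:ℝ)..z, d t) = ∫ t in vl..z, (c - G t) := by
    intro z hzl hzh
    rw [hddef, dInt_formula G vl vh c hvl0 z (hvl0.le.trans hzl)]
    rw [min_eq_left hzh, max_eq_right hzl]
  have hTval : (∫ t in vl..vh, (c - G t)) = 0 := by
    rw [intervalIntegral.integral_sub (intervalIntegrable_const) (hGc.intervalIntegrable vl vh),
      intervalIntegral.integral_const]
    rw [hcdef, smul_eq_mul, mul_div_assoc', mul_div_cancel_left₀ _ hlhpos.ne']; exact sub_self _
  have hDend : ∀ z : ℝ, vh ≤ z → (∫ t in (0:ℝ)..z, d t) = 0 := by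
    intro z hzh
    rw [hddef, dInt_formula G vl vh c hvl0 z (by linarith)]
    rw [min_eq_right hzh, max_eq_right hlh.le]
    exact hTval
  -- bounds on middle part
  have hmid_nonneg : ∀ z : ℝ, vl ≤ z → z ≤ vh → 0 ≤ ∫ t in vl..z, (c - G t) := by
    intro z hzl hzh
    have hI1 : (∫ t in vl..z, G t) ≤ (z - vl) * G z := by
      have := intervalIntegral.integral_mono_on hzl
        (hGc.intervalIntegrable vl z) (intervalIntegrable_const (μ := volume) (c := G z))
        (fun x hx => hGm hx.2)
      simpa [mul_comm] using this
    have hI2 : (vh - z) * G z ≤ ∫ t in z..vh, G t := by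
      have := intervalIntegral.integral_mono_on hzh
        (intervalIntegrable_const (μ := volume) (c := G z)) (hGc.intervalIntegrable z vh)
        (fun x hx => hGm hx.1)
      simpa [mul_comm] using this
    have hsplit : (∫ t in vl..z, G t) + (∫ t in z..vh, G t) = T :=
      intervalIntegral.integral_add_adjacent_intervals
        (hGc.intervalIntegrable vl z) (hGc.intervalIntegrable z vh)
    rw [intervalIntegral.integral_sub intervalIntegrable_const (hGc.intervalIntegrable vl z),
      intervalIntegral.integral_const, smul_eq_mul, sub_nonneg, hcdef,
      ← mul_div_assoc, le_div_iff₀ hlhpos]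
    nlinarith [hI1, hI2, sub_nonneg.2 hzl, sub_nonneg.2 hzh]
  have hmid_upper : ∀ z : ℝ, vl ≤ z → z ≤ vh → (∫ t in vl..z, (c - G t)) ≤ vh - vl := by
    intro z hzl hzh
    have hstep : (∫ t in vl..z, (c - G t)) ≤ (z - vl) * (c - G vl) := by
      have := intervalIntegral.integral_mono_on (μ := volume) (f := fun t => c - G t)
        (g := fun _ => c - G vl) hzl
        ((continuous_const.sub hGc).intervalIntegrable vl z)
        intervalIntegrable_const
        (fun x hx => sub_le_sub_left (hGm hx.1) c)
      rw [intervalIntegral.integral_const, smul_eq_mul] at this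
      exact this
    have hGvl0 : 0 ≤ G vl := hG0 ▸ hGm hvl0.le
    have hGvh1 : G vh ≤ 1 := hG1 ▸ hGm hvh1
    nlinarith [sub_nonneg.2 hzl, sub_nonneg.2 hzh]
  -- pointwise description of Ghat
  have hg1 : ∀ v, v < vl → Ghat v = G v := by
    intro v hv
    simp [hGhatdef, hddef, Set.indicator_of_notMem, Set.mem_Ico, not_le.2 hv]
  have hg2 : ∀ v, vl ≤ v → v < vh → Ghat v = c := by
    intro v hv1 hv2
    simp [hGhatdef, hddef, Set.indicator_of_mem, Set.mem_Ico.2 ⟨hv1, hv2⟩]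
  have hg3 : ∀ v, vh ≤ v → Ghat v = G v := by
    intro v hv
    have : v ∉ Set.Ico vl vh := by simp [Set.mem_Ico]; intro _; linarith
    simp [hGhatdef, hddef, Set.indicator_of_notMem, this]
  -- monotone
  have hmono : Monotone Ghat := by
    intro x y hxy
    rcases lt_or_ge x vl with hx | hx
    · rcases lt_or_ge y vl with hy | hy
      · rw [hg1 x hx, hg1 y hy]; exact hGm hxy
      · rcases lt_or_ge y vh with hy2 | hy2
        · rw [hg1 x hx, hg2 y hy hy2]
          exact le_trans (hGm hx.le) hcl
        · rw [hg1 x hx, hg3 y hy2]; exact hGm hxy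
    · rcases lt_or_ge x vh with hx2 | hx2
      · rcases lt_or_ge y vh with hy2 | hy2
        · rw [hg2 x hx hx2, hg2 y (hx.trans hxy) hy2]
        · rw [hg2 x hx hx2, hg3 y hy2]
          exact le_trans hch (hGm hy2)
      · rw [hg3 x hx2, hg3 y (hx2.trans hxy)]; exact hGm hxy
  -- D rewriting
  have hDeq : ∀ z : ℝ, (∫ v in (0:ℝ)..z, (Ghat v - G v)) = ∫ t in (0:ℝ)..z, d t := by
    intro z
    apply intervalIntegral.integral_congr
    intro t _
    simp [hGhatdef]
  have hFeq : ∀ z : ℝ, (∫ v in (0:ℝ)..z, (F v - Ghat v))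
      = (∫ v in (0:ℝ)..z, (F v - G v)) - ∫ t in (0:ℝ)..z, d t := by
    intro z
    rw [← intervalIntegral.integral_sub (hFG.intervalIntegrable 0 z) (hdint 0 z)]
    apply intervalIntegral.integral_congr
    intro t _
    simp [hGhatdef]; ring
  have hDnonneg : ∀ z ∈ Set.Icc (0:ℝ) 1, 0 ≤ ∫ t in (0:ℝ)..z, d t := by
    intro z hz
    rcases le_or_gt z vl with hzl | hzl
    · rw [hD0 z hz.1 hzl]
    · rcases le_or_gt z vh with hzh | hzh
      · rw [hDmid z hzl.le hzh]; exact hmid_nonneg z hzl.le hzh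
      · rw [hDend z hzh.le]
  have hDupper : ∀ z ∈ Set.Icc (0:ℝ) 1, (∫ t in (0:ℝ)..z, d t) ≤ H z := by
    intro z hz
    rcases le_or_gt z vl with hzl | hzl
    · rw [hD0 z hz.1 hzl]; exact hMPC.1 z hz
    · rcases le_or_gt z vh with hzh | hzh
      · rw [hDmid z hzl.le hzh]
        have h1' : (∫ t in vl..z, (c - G t)) ≤ vh - vl := hmid_upper z hzl.le hzh
        have h2' : ε ≤ H z := isMinOn_iff.1 hzmin z ⟨hzl.le, hzh.trans hhv2⟩
        linarith
      · rw [hDend z hzh.le]; exact hMPC.1 z hz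
  have hD1 : (∫ t in (0:ℝ)..1, d t) = 0 := hDend 1 hvh1
  refine ⟨vl, vh, hav1.le, hlh, hhv2, Ghat, hg1, ?_, hg3, hmono, ?_, ?_⟩
  · intro v hv1 hv2; rw [hg2 v hv1 hv2]
  · constructor
    · intro z hz; rw [hDeq z]; exact hDnonneg z hz
    · rw [hDeq 1, hD1]
  · constructor
    · intro z hz; rw [hFeq z]
      have := hDupper z hz
      linarith [hDupper z hz]
    · rw [hFeq 1, hD1, hMPC.2, sub_zero]
end

section
/- Let G be an MPC of F having the disclosure form with parameters (v_L, v_H, β, r) and satisfying G(v_H) = F(v_H). Then ∫_{(r,1]} (v − r) dG(v) = ∫_{v_L}^1 (v − r) f(v) dv, where dG denotes the Lebesgue–Stieltjes measure induced by G. -/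
open MeasureTheory Set Filter Topology

/-- `G` has the disclosure form with parameters `(v_L, v_H, β, r)`:
full disclosure below `v_L`, a gap on `(v_L, r)`, the affine-in-`G^{n-1}` piece on `[r, v_H]`,
and full disclosure above `v_H`. -/
def DisclosureForm (F : ℝ → ℝ) (n : ℕ) (vL vH β r : ℝ) (G : ℝ → ℝ) : Prop :=
  0 ≤ vL ∧ vL < r ∧ r < vH ∧ vH ≤ 1 ∧ 0 < β ∧
  (∀ v, v ≤ vL → G v = F v) ∧
  (∀ v, vL < v → v < r → G v = F vL) ∧
  (∀ v, r ≤ v → v ≤ vH →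
    G v = (min (F vL ^ (n - 1) + β * (v - r)) 1) ^ (((n : ℝ) - 1)⁻¹)) ∧
  (∀ v, vH < v → v ≤ 1 → G v = F v)

/-- A Stieltjes function is a CDF on `[0,1]`: it vanishes below `0` and equals `1` from `1` on. -/
def IsCDF01 (G : StieltjesFunction ℝ) : Prop :=
  (∀ v < (0 : ℝ), G v = 0) ∧ ∀ v, (1 : ℝ) ≤ v → G v = 1

lemma lcake (G : StieltjesFunction ℝ) (hG1 : ∀ v, (1:ℝ) ≤ v → G v = 1) {r : ℝ} (hr : r < 1) :
    (∫ v in Set.Ioc r 1, (v - r) ∂G.measure) = (1 - r) - ∫ v in r..1, G v := by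
  have hGle1 : ∀ v, G v ≤ 1 := by
    intro v
    rcases le_or_gt 1 v with h | h
    · exact (hG1 v h).le
    · calc G v ≤ G 1 := G.mono h.le
        _ = 1 := hG1 1 le_rfl
  set μ := G.measure.restrict (Set.Ioc r 1) with hμ
  have hfin : IsFiniteMeasure μ := by
    constructor
    rw [hμ, Measure.restrict_apply_univ, G.measure_Ioc]
    exact ENNReal.ofReal_lt_top
  haveI := hfin
  have hmeas : AEStronglyMeasurable (fun v : ℝ => v - r) μ :=
    (continuous_id.sub continuous_const).aestronglyMeasurable
  have hint : Integrable (fun v : ℝ => v - r) μ := by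
    refine (integrable_const (1 - r)).mono' hmeas ?_
    rw [hμ]
    refine (ae_restrict_iff' measurableSet_Ioc).2 (ae_of_all _ fun x hx => ?_)
    rw [Real.norm_eq_abs, abs_of_nonneg (by linarith [hx.1])]
    linarith [hx.2]
  have hnn : 0 ≤ᵐ[μ] fun v : ℝ => v - r := by
    rw [hμ]
    exact (ae_restrict_iff' measurableSet_Ioc).2 (ae_of_all _ fun x hx => sub_nonneg.2 hx.1.le)
  rw [hint.integral_eq_integral_meas_lt hnn]
  have hkey : ∀ t ∈ Set.Ioi (0:ℝ),
      ENNReal.toReal (μ {a : ℝ | t < a - r}) = 1 - G (r + t) := by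
    intro t ht
    have hset : {a : ℝ | t < a - r} = Set.Ioi (r + t) := by
      ext a; simp [Set.mem_Ioi]; constructor <;> intro h <;> linarith
    rw [hμ, Measure.restrict_apply (by rw [hset]; exact measurableSet_Ioi), hset]
    have : Set.Ioi (r + t) ∩ Set.Ioc r 1 = Set.Ioc (r + t) 1 := by
      ext a
      simp only [Set.mem_inter_iff, Set.mem_Ioi, Set.mem_Ioc]
      constructor
      · rintro ⟨h1, _, h3⟩; exact ⟨h1, h3⟩
      · rintro ⟨h1, h2⟩; exact ⟨h1, by linarith [ht.out], h2⟩
    rw [this, G.measure_Ioc, ENNReal.toReal_ofReal_eq_iff.2]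
    · rw [hG1 1 le_rfl]
    · rw [hG1 1 le_rfl]; linarith [hGle1 (r + t)]
  rw [setIntegral_congr_fun measurableSet_Ioi (f := fun t => μ.real {a : ℝ | t < a - r}) (fun t ht => (measureReal_def _ _).trans (hkey t ht))]
  have hsplit : Set.Ioi (0:ℝ) = Set.Ioc 0 (1 - r) ∪ Set.Ioi (1 - r) :=
    (Set.Ioc_union_Ioi_eq_Ioi (by linarith)).symm
  have hzero : ∀ t ∈ Set.Ioi (1 - r), (1 : ℝ) - G (r + t) = 0 := by
    intro t ht
    rw [hG1 (r + t) (by linarith [ht.out])]; ring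
  have hGm : Monotone fun t : ℝ => G (r + t) := fun a b hab => G.mono (by linarith)
  have hint1 : IntegrableOn (fun t : ℝ => 1 - G (r + t)) (Set.Ioc 0 (1 - r)) := by
    have := ((intervalIntegrable_const (μ := volume) (c := (1:ℝ))).sub hGm.intervalIntegrable
      (a := 0) (b := 1 - r)).1
    simpa using this
  have hint2 : IntegrableOn (fun t : ℝ => 1 - G (r + t)) (Set.Ioi (1 - r)) :=
    (integrableOn_zero).congr_fun (fun x hx => (hzero x hx).symm) measurableSet_Ioi
  rw [hsplit, setIntegral_union (Set.Ioc_disjoint_Ioi le_rfl) measurableSet_Ioi hint1 hint2,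
    setIntegral_eq_zero_of_forall_eq_zero hzero, add_zero,
    ← intervalIntegral.integral_of_le (by linarith)]
  have : ∫ t in (0:ℝ)..(1 - r), (1 - G (r + t)) =
      (1 - r) - ∫ t in (0:ℝ)..(1 - r), G (r + t) := by
    rw [intervalIntegral.integral_sub (intervalIntegrable_const (μ := volume)) hGm.intervalIntegrable,
      intervalIntegral.integral_const]
    simp
  rw [this, intervalIntegral.integral_comp_add_left (fun v => G v) r]
  norm_num

/-- Search equation simplification. If `G` is an MPC of `F` with the
disclosure form `(v_L, v_H, β, r)` and `G v_H = F v_H`, then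
`∫_{(r,1]} (v - r) dG = ∫_{v_L}^1 (v - r) f(v) dv`. -/
theorem stmt7 (F f : ℝ → ℝ) (n : ℕ)
    (hf_cont : ContinuousOn f (Set.Icc 0 1))
    (hf_pos : ∀ v ∈ Set.Icc (0 : ℝ) 1, 0 < f v)
    (hF : ∀ z ∈ Set.Icc (0 : ℝ) 1, F z = ∫ t in (0 : ℝ)..z, f t)
    (hF1 : F 1 = 1)
    (hn : 2 ≤ n)
    (hconv : ConvexOn ℝ (Set.Icc (0 : ℝ) 1) fun v => F v ^ (n - 1))
    (r vL vH β : ℝ) (G : StieltjesFunction ℝ) (hGcdf : IsCDF01 G)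
    (hMPC : MPCof (G : ℝ → ℝ) F)
    (hform : DisclosureForm F n vL vH β r (G : ℝ → ℝ))
    (hcontact : (G : ℝ → ℝ) vH = F vH) :
    (∫ v in Set.Ioc r 1, (v - r) ∂G.measure) = ∫ v in vL..1, (v - r) * f v := by
  obtain ⟨hvL0, hvLr, hrvH, hvH1, hβ, hA, hB, hC, hD⟩ := hform
  have hr1 : r < 1 := lt_of_lt_of_le hrvH hvH1
  have hvL1 : vL ≤ 1 := le_of_lt (lt_trans hvLr hr1)
  have hG1 : ∀ v, (1:ℝ) ≤ v → (G : ℝ → ℝ) v = 1 := hGcdf.2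
  -- continuity of F on [0,1]
  have hfInt : IntegrableOn f (Set.Icc 0 1) := hf_cont.integrableOn_Icc
  have hFcont : ContinuousOn F (Set.Icc 0 1) := by
    have h1 : ContinuousOn (fun z => ∫ t in (0:ℝ)..z, f t) (Set.Icc 0 1) := by
      have := intervalIntegral.continuousOn_primitive_interval (μ := volume) (a := (0:ℝ)) (b := 1) (f := f)
        (by rwa [Set.uIcc_of_le zero_le_one])
      rwa [Set.uIcc_of_le zero_le_one] at this
    exact h1.congr hF
  have hFim : ∀ a b : ℝ, a ∈ Set.Icc (0:ℝ) 1 → b ∈ Set.Icc (0:ℝ) 1 →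
      IntervalIntegrable F volume a b := fun a b ha hb =>
    (hFcont.mono (Set.uIcc_subset_Icc ha hb)).intervalIntegrable
  have hGint : ∀ a b : ℝ, IntervalIntegrable (G : ℝ → ℝ) volume a b := fun a b =>
    G.mono.intervalIntegrable
  have hmemvL : vL ∈ Set.Icc (0:ℝ) 1 := ⟨hvL0, hvL1⟩
  have hmem1 : (1:ℝ) ∈ Set.Icc (0:ℝ) 1 := ⟨zero_le_one, le_rfl⟩
  have hmem0 : (0:ℝ) ∈ Set.Icc (0:ℝ) 1 := ⟨le_rfl, zero_le_one⟩
  have hi1 : IntervalIntegrable (fun v => F v - (G : ℝ → ℝ) v) volume 0 vL :=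
    (hFim 0 vL hmem0 hmemvL).sub (hGint 0 vL)
  have hi2 : IntervalIntegrable (fun v => F v - (G : ℝ → ℝ) v) volume vL 1 :=
    (hFim vL 1 hmemvL hmem1).sub (hGint vL 1)
  -- ∫_0^vL (F - G) = 0
  have hsub1 : ∫ v in (0:ℝ)..vL, (F v - (G : ℝ → ℝ) v) = 0 := by
    have heq : Set.EqOn (fun v => F v - (G : ℝ → ℝ) v) (fun _ => (0:ℝ)) (Set.uIcc 0 vL) := by
      intro v hv
      rw [Set.uIcc_of_le hvL0] at hv
      simp [hA v hv.2]
    rw [intervalIntegral.integral_congr heq, intervalIntegral.integral_zero]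
  have hadd := intervalIntegral.integral_add_adjacent_intervals hi1 hi2
  have hsub2 : ∫ v in vL..1, (F v - (G : ℝ → ℝ) v) = 0 := by
    have := hMPC.2
    linarith [hadd, hsub1, this]
  have hFeqG : ∫ v in vL..1, F v = ∫ v in vL..1, (G : ℝ → ℝ) v := by
    have := intervalIntegral.integral_sub (hFim vL 1 hmemvL hmem1) (hGint vL 1)
    rw [hsub2] at this
    linarith [this]
  -- ∫_vL^r G = (r - vL) * F vL
  have hconst : ∫ v in vL..r, (G : ℝ → ℝ) v = (r - vL) * F vL := by
    have hne : ∀ᵐ x : ℝ, x ≠ r := by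
      rw [ae_iff]
      simpa [not_not] using measure_singleton r
    have hae : ∀ᵐ x : ℝ, x ∈ Set.uIoc vL r → (G : ℝ → ℝ) x = F vL := by
      filter_upwards [hne] with x hx hmem
      rw [Set.uIoc_of_le hvLr.le] at hmem
      exact hB x hmem.1 (lt_of_le_of_ne hmem.2 hx)
    rw [intervalIntegral.integral_congr_ae hae, intervalIntegral.integral_const, smul_eq_mul]
  have hadd2 := intervalIntegral.integral_add_adjacent_intervals (hGint vL r) (hGint r 1)
  have key : ∫ v in vL..1, F v = (r - vL) * F vL + ∫ v in r..1, (G : ℝ → ℝ) v := by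
    rw [hFeqG, ← hadd2, hconst]
  -- integration by parts for the RHS
  have hparts : ∫ v in vL..1, (v - r) * f v
      = (1 - r) * F 1 - (∫ t in vL..1, F t) - (vL - r) * F vL := by
    set g : ℝ → ℝ := fun v => (v - r) * F v - ∫ t in vL..v, F t with hg
    have hcontg : ContinuousOn g (Set.Icc vL 1) := by
      apply ContinuousOn.sub
      · exact (continuousOn_id.sub continuousOn_const).mul
          (hFcont.mono (Set.Icc_subset_Icc hvL0 le_rfl))
      · have := intervalIntegral.continuousOn_primitive_interval (μ := volume) (a := vL) (b := 1) (f := F)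
          (by rw [Set.uIcc_of_le hvL1]
              exact (hFcont.mono (Set.Icc_subset_Icc hvL0 le_rfl)).integrableOn_Icc)
        rwa [Set.uIcc_of_le hvL1] at this
    have hmeasf : ∀ x ∈ Set.Ioo (0:ℝ) 1, StronglyMeasurableAtFilter f (𝓝 x) volume :=
      ContinuousAt.stronglyMeasurableAtFilter isOpen_Ioo
        (fun y hy => hf_cont.continuousAt (Icc_mem_nhds hy.1 hy.2))
    have hmeasF : ∀ x ∈ Set.Ioo (0:ℝ) 1, StronglyMeasurableAtFilter F (𝓝 x) volume :=
      ContinuousAt.stronglyMeasurableAtFilter isOpen_Ioo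
        (fun y hy => hFcont.continuousAt (Icc_mem_nhds hy.1 hy.2))
    have hderiv : ∀ x ∈ Set.Ioo vL 1, HasDerivWithinAt g ((x - r) * f x) (Set.Ioi x) x := by
      intro x hx
      have hx01 : x ∈ Set.Ioo (0:ℝ) 1 := ⟨lt_of_le_of_lt hvL0 hx.1, hx.2⟩
      have hnhds : Set.Icc (0:ℝ) 1 ∈ 𝓝 x := Icc_mem_nhds hx01.1 hx01.2
      have hxmem : x ∈ Set.Icc (0:ℝ) 1 := ⟨hx01.1.le, hx01.2.le⟩
      have hfx : ContinuousAt f x := hf_cont.continuousAt hnhds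
      have hFx : ContinuousAt F x := hFcont.continuousAt hnhds
      have hP : HasDerivAt (fun u => ∫ t in (0:ℝ)..u, f t) (f x) x :=
        intervalIntegral.integral_hasDerivAt_right
          ((hf_cont.mono (Set.uIcc_subset_Icc hmem0 hxmem)).intervalIntegrable)
          (hmeasf x hx01) hfx
      have hFd : HasDerivAt F (f x) x := by
        refine HasDerivAt.congr_of_eventuallyEq hP ?_
        filter_upwards [hnhds] with y hy using hF y hy
      have hprod : HasDerivAt (fun v => (v - r) * F v) (1 * F x + (x - r) * f x) x :=
        ((hasDerivAt_id x).sub_const r).mul hFd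
      have hprim : HasDerivAt (fun u => ∫ t in vL..u, F t) (F x) x :=
        intervalIntegral.integral_hasDerivAt_right (hFim vL x hmemvL hxmem)
          (hmeasF x hx01) hFx
      have hgd := hprod.sub hprim
      have : (1 * F x + (x - r) * f x - F x) = (x - r) * f x := by ring
      rw [this] at hgd
      exact hgd.hasDerivWithinAt
    have hfint : IntervalIntegrable (fun v => (v - r) * f v) volume vL 1 := by
      apply ContinuousOn.intervalIntegrable
      exact (continuousOn_id.sub continuousOn_const).mul
        (hf_cont.mono (Set.uIcc_subset_Icc hmemvL hmem1))
    have hFTC := intervalIntegral.integral_eq_sub_of_hasDeriv_right_of_le hvL1 hcontg hderiv hfint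
    rw [hFTC, hg]
    simp only [intervalIntegral.integral_same]
    ring
  rw [lcake G hG1 hr1, hparts, hF1]
  linarith [key]
end

section
/- Fix s ∈ (0, μ). For each v_L ∈ [0,1) let r^{se}(v_L) be the unique real number r satisfying ∫_{v_L}^1 (v − r) f(v) dv = s (the left-hand side is affine and strictly decreasing in r, so this solution exists and is unique). Then: (i) r^{se}(0) = μ − s; (ii) r^{se} is differentiable on (0,1) with (r^{se})′(v_L) = (r^{se}(v_L) − v_L) · f(v_L)/(1 − F(v_L)); (iii) there is a unique r^{fi} ∈ (0,1) with r^{se}(r^{fi}) = r^{fi}; (iv) for v_L < r^{fi} one has r^{se}(v_L) > v_L and r^{se} is strictly increasing, while for v_L ∈ (r^{fi}, 1) one has r^{se}(v_L) < v_L and r^{se} is strictly decreasing. -/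
open MeasureTheory Set Filter

/-- The search-equation curve `r^{se}`. Fix `s ∈ (0, μ)` and let
`r^{se}(v_L)` solve `∫_{v_L}^1 (v − r) f(v) dv = s`. Then `r^{se}(0) = μ − s`; `r^{se}` is
differentiable with derivative `(r^{se}(v_L) − v_L) f(v_L)/(1 − F(v_L))`; it has a unique
fixed point `r^{fi} ∈ (0,1)`; it lies above the diagonal and is strictly increasing below
`r^{fi}`, and lies below the diagonal and is strictly decreasing above `r^{fi}`. -/
theorem stmt8 (F f : ℝ → ℝ) (μ : ℝ)
    (hf_cont : ContinuousOn f (Set.Icc 0 1))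
    (hf_pos : ∀ v ∈ Set.Icc (0 : ℝ) 1, 0 < f v)
    (hF : ∀ z ∈ Set.Icc (0 : ℝ) 1, F z = ∫ t in (0 : ℝ)..z, f t)
    (hF1 : F 1 = 1)
    (hμ : μ = ∫ v in (0 : ℝ)..1, v * f v)
    (s : ℝ) (hs : s ∈ Set.Ioo (0 : ℝ) μ)
    (rse : ℝ → ℝ)
    (hrse : ∀ vL ∈ Set.Ico (0 : ℝ) 1, (∫ v in vL..1, (v - rse vL) * f v) = s) :
    rse 0 = μ - s ∧
    (∀ vL ∈ Set.Ioo (0 : ℝ) 1,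
      HasDerivAt rse ((rse vL - vL) * f vL / (1 - F vL)) vL) ∧
    ∃ rfi : ℝ, rfi ∈ Set.Ioo (0 : ℝ) 1 ∧ rse rfi = rfi ∧
      (∀ r' ∈ Set.Ioo (0 : ℝ) 1, rse r' = r' → r' = rfi) ∧
      (∀ vL, 0 ≤ vL → vL < rfi → vL < rse vL) ∧
      StrictMonoOn rse (Set.Ico 0 rfi) ∧
      (∀ vL, rfi < vL → vL < 1 → rse vL < vL) ∧
      StrictAntiOn rse (Set.Ioo rfi 1) := by
  obtain ⟨hs0, hsμ⟩ := hs
  set A : ℝ → ℝ := fun x => ∫ v in x..1, f v with hAdef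
  set B : ℝ → ℝ := fun x => ∫ v in x..1, v * f v with hBdef
  have hvf_cont : ContinuousOn (fun v => v * f v) (Set.Icc 0 1) :=
    continuousOn_id.mul hf_cont
  -- integrability
  have hsub : ∀ a b : ℝ, a ∈ Set.Icc (0:ℝ) 1 → b ∈ Set.Icc (0:ℝ) 1 →
      Set.uIcc a b ⊆ Set.Icc 0 1 := fun a b ha hb => Set.uIcc_subset_Icc ha hb
  have hint_f : ∀ a b : ℝ, a ∈ Set.Icc (0:ℝ) 1 → b ∈ Set.Icc (0:ℝ) 1 →
      IntervalIntegrable f volume a b := fun a b ha hb =>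
    (hf_cont.mono (hsub a b ha hb)).intervalIntegrable
  have hint_vf : ∀ a b : ℝ, a ∈ Set.Icc (0:ℝ) 1 → b ∈ Set.Icc (0:ℝ) 1 →
      IntervalIntegrable (fun v => v * f v) volume a b := fun a b ha hb =>
    (hvf_cont.mono (hsub a b ha hb)).intervalIntegrable
  have h01 : (0:ℝ) ∈ Set.Icc (0:ℝ) 1 := by norm_num
  have h11 : (1:ℝ) ∈ Set.Icc (0:ℝ) 1 := by norm_num
  -- linearity
  have key : ∀ x ∈ Set.Icc (0:ℝ) 1, ∀ r : ℝ,
      (∫ v in x..1, (v - r) * f v) = B x - r * A x := by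
    intro x hx r
    have : ∀ v : ℝ, (v - r) * f v = v * f v - r * f v := fun v => by ring
    simp_rw [this]
    rw [intervalIntegral.integral_sub (hint_vf x 1 hx h11)
      ((hint_f x 1 hx h11).const_mul r), intervalIntegral.integral_const_mul]
  -- A x = 1 - F x
  have hA1 : ∀ x ∈ Set.Icc (0:ℝ) 1, A x = 1 - F x := by
    intro x hx
    have hadd : F x + A x = (∫ v in (0:ℝ)..1, f v) := by
      rw [hF x hx]
      exact intervalIntegral.integral_add_adjacent_intervals (hint_f 0 x h01 hx)
        (hint_f x 1 hx h11)
    have hF1' : (∫ v in (0:ℝ)..1, f v) = 1 := by rw [← hF 1 h11]; exact hF1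
    rw [hF1'] at hadd; linarith
  -- positivity of A on [0,1)
  have hApos : ∀ x ∈ Set.Ico (0:ℝ) 1, 0 < A x := by
    intro x hx
    apply intervalIntegral.intervalIntegral_pos_of_pos_on
      (hint_f x 1 ⟨hx.1, hx.2.le⟩ h11)
    · intro t ht
      exact hf_pos t ⟨le_trans hx.1 ht.1.le, ht.2.le⟩
    · exact hx.2
  -- formula for rse
  have hrse_eq : ∀ x ∈ Set.Ico (0:ℝ) 1, rse x = (B x - s) / A x := by
    intro x hx
    have h1 := hrse x hx
    rw [key x ⟨hx.1, hx.2.le⟩ (rse x)] at h1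
    have := (hApos x hx).ne'
    field_simp
    linarith
  have hB0 : B 0 = μ := hμ.symm
  have hA0 : A 0 = 1 := by rw [hA1 0 h01]; norm_num [hF 0 h01]
  have part1 : rse 0 = μ - s := by
    rw [hrse_eq 0 (by norm_num), hA0, hB0]; ring
  -- continuity of A and B on [0,1]
  have hI01 : Set.uIcc (0:ℝ) 1 = Set.Icc 0 1 := Set.uIcc_of_le (by norm_num)
  have hAcont : ContinuousOn A (Set.Icc 0 1) := by
    rw [← hI01]
    exact intervalIntegral.continuousOn_primitive_interval_left
      (by rw [hI01]; exact hf_cont.integrableOn_compact isCompact_Icc)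
  have hBcont : ContinuousOn B (Set.Icc 0 1) := by
    rw [← hI01]
    exact intervalIntegral.continuousOn_primitive_interval_left
      (by rw [hI01]; exact hvf_cont.integrableOn_compact isCompact_Icc)
  -- derivatives of A and B at interior points
  have hderivA : ∀ x ∈ Set.Ioo (0:ℝ) 1, HasDerivAt A (-(f x)) x := by
    intro x hx
    have hnb : Set.Icc (0:ℝ) 1 ∈ nhds x := Icc_mem_nhds hx.1 hx.2
    exact intervalIntegral.integral_hasDerivAt_left
      (hint_f x 1 ⟨hx.1.le, hx.2.le⟩ h11)
      ⟨Set.Icc 0 1, hnb, hf_cont.aestronglyMeasurable measurableSet_Icc⟩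
      (hf_cont.continuousAt hnb)
  have hderivB : ∀ x ∈ Set.Ioo (0:ℝ) 1, HasDerivAt B (-(x * f x)) x := by
    intro x hx
    have hnb : Set.Icc (0:ℝ) 1 ∈ nhds x := Icc_mem_nhds hx.1 hx.2
    exact intervalIntegral.integral_hasDerivAt_left
      (hint_vf x 1 ⟨hx.1.le, hx.2.le⟩ h11)
      ⟨Set.Icc 0 1, hnb, hvf_cont.aestronglyMeasurable measurableSet_Icc⟩
      (hvf_cont.continuousAt hnb)
  -- derivative of rse
  have part2 : ∀ vL ∈ Set.Ioo (0:ℝ) 1,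
      HasDerivAt rse ((rse vL - vL) * f vL / (1 - F vL)) vL := by
    intro x hx
    have hxI : x ∈ Set.Ico (0:ℝ) 1 := ⟨hx.1.le, hx.2⟩
    have hAx : 0 < A x := hApos x hxI
    have hg : HasDerivAt (fun y => (B y - s) / A y)
        (((-(x * f x)) * A x - (B x - s) * (-(f x))) / (A x)^2) x :=
      HasDerivAt.div ((hderivB x hx).sub_const s) (hderivA x hx) hAx.ne'
    have heq : (fun y => (B y - s) / A y) =ᶠ[nhds x] rse := by
      filter_upwards [Ioo_mem_nhds hx.1 hx.2] with y hy
      exact (hrse_eq y ⟨hy.1.le, hy.2⟩).symm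
    have hval : ((-(x * f x)) * A x - (B x - s) * (-(f x))) / (A x)^2
        = (rse x - x) * f x / (1 - F x) := by
      rw [hrse_eq x hxI, ← hA1 x ⟨hx.1.le, hx.2.le⟩]
      field_simp
      ring
    rw [← hval]
    exact hg.congr_of_eventuallyEq heq.symm
  refine ⟨part1, part2, ?_⟩
  -- the function φ
  set φ : ℝ → ℝ := fun x => B x - x * A x - s with hφdef
  have hφcont : ContinuousOn φ (Set.Icc 0 1) :=
    (hBcont.sub (continuousOn_id.mul hAcont)).sub continuousOn_const
  have hφ0 : φ 0 = μ - s := by simp [hφdef, hB0]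
  have hA1' : A 1 = 0 := by simp [hAdef]
  have hB1 : B 1 = 0 := by simp [hBdef]
  have hφ1 : φ 1 = -s := by simp [hφdef, hA1', hB1]
  have hφderiv : ∀ x ∈ Set.Ioo (0:ℝ) 1, HasDerivAt φ (-(A x)) x := by
    intro x hx
    have h : HasDerivAt (fun y => B y - y * A y - s)
        (-(x * f x) - (1 * A x + x * -(f x))) x :=
      ((hderivB x hx).sub ((hasDerivAt_id' x).mul (hderivA x hx))).sub_const s
    convert h using 1; ring
  have hφanti : StrictAntiOn φ (Set.Icc 0 1) := by
    apply strictAntiOn_of_deriv_neg (convex_Icc 0 1) hφcont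
    intro x hx
    rw [interior_Icc] at hx
    rw [(hφderiv x hx).deriv]
    have := hApos x ⟨hx.1.le, hx.2⟩
    linarith
  -- existence of the fixed point
  have hss : (0:ℝ) ∈ Set.Ioo (φ 1) (φ 0) := by
    rw [hφ0, hφ1]; constructor <;> linarith
  obtain ⟨rfi, hrfi_mem, hrfi0⟩ := intermediate_value_Ioo' (by norm_num : (0:ℝ) ≤ 1) hφcont hss
  have hrfiIcc : rfi ∈ Set.Icc (0:ℝ) 1 := ⟨hrfi_mem.1.le, hrfi_mem.2.le⟩
  -- φ x = (rse x - x) * A x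
  have hφ_eq : ∀ x ∈ Set.Ico (0:ℝ) 1, φ x = (rse x - x) * A x := by
    intro x hx
    have := hrse_eq x hx
    have hAx := (hApos x hx).ne'
    rw [hφdef]
    field_simp [this]
    linear_combination -(eq_div_iff hAx).mp this
  have hfix : rse rfi = rfi := by
    have h := hφ_eq rfi ⟨hrfi_mem.1.le, hrfi_mem.2⟩
    rw [hrfi0] at h
    have hAr := (hApos rfi ⟨hrfi_mem.1.le, hrfi_mem.2⟩).ne'
    have := mul_eq_zero.mp h.symm
    rcases this with h' | h'
    · linarith
    · exact absurd h' hAr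
  -- sign facts
  have habove : ∀ vL, 0 ≤ vL → vL < rfi → vL < rse vL := by
    intro vL h0 hlt
    have hvI : vL ∈ Set.Ico (0:ℝ) 1 := ⟨h0, lt_trans hlt hrfi_mem.2⟩
    have hφpos : 0 < φ vL := by
      have := hφanti ⟨h0, (lt_trans hlt hrfi_mem.2).le⟩ hrfiIcc hlt
      rw [hrfi0] at this; exact this
    rw [hφ_eq vL hvI] at hφpos
    have hAv := hApos vL hvI
    nlinarith
  have hbelow : ∀ vL, rfi < vL → vL < 1 → rse vL < vL := by
    intro vL hlt h1
    have hvI : vL ∈ Set.Ico (0:ℝ) 1 := ⟨le_trans hrfi_mem.1.le hlt.le, h1⟩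
    have hφneg : φ vL < 0 := by
      have := hφanti hrfiIcc ⟨hvI.1, h1.le⟩ hlt
      rw [hrfi0] at this; exact this
    rw [hφ_eq vL hvI] at hφneg
    have hAv := hApos vL hvI
    nlinarith
  -- uniqueness
  have huniq : ∀ r' ∈ Set.Ioo (0:ℝ) 1, rse r' = r' → r' = rfi := by
    intro r' hr' hfix'
    by_contra hne
    rcases lt_or_gt_of_ne hne with h | h
    · exact absurd hfix'.symm (ne_of_lt (habove r' hr'.1.le h))
    · exact absurd hfix' (ne_of_lt (hbelow r' h hr'.2))
  -- continuity of rse on [0,1)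
  have hrse_cont : ContinuousOn rse (Set.Ico 0 1) := by
    apply ContinuousOn.congr (f := fun x => (B x - s) / A x)
    · apply ContinuousOn.div
      · exact (hBcont.mono Set.Ico_subset_Icc_self).sub continuousOn_const
      · exact hAcont.mono Set.Ico_subset_Icc_self
      · intro x hx; exact (hApos x hx).ne'
    · intro x hx; exact hrse_eq x hx
  -- strict monotonicity below rfi
  have hmono : StrictMonoOn rse (Set.Ico 0 rfi) := by
    apply strictMonoOn_of_deriv_pos (convex_Ico 0 rfi)
      (hrse_cont.mono (Set.Ico_subset_Ico_right hrfi_mem.2.le))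
    intro x hx
    rw [interior_Ico] at hx
    have hxI : x ∈ Set.Ioo (0:ℝ) 1 := ⟨hx.1, lt_trans hx.2 hrfi_mem.2⟩
    rw [(part2 x hxI).deriv]
    have h1 : x < rse x := habove x hx.1.le hx.2
    have h2 : 0 < f x := hf_pos x ⟨hxI.1.le, hxI.2.le⟩
    have h3 : 0 < 1 - F x := by
      rw [← hA1 x ⟨hxI.1.le, hxI.2.le⟩]; exact hApos x ⟨hxI.1.le, hxI.2⟩
    have h4 : 0 < rse x - x := by linarith
    positivity
  -- strict antitonicity above rfi
  have hanti : StrictAntiOn rse (Set.Ioo rfi 1) := by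
    apply strictAntiOn_of_deriv_neg (convex_Ioo rfi 1)
      (hrse_cont.mono (fun x hx => ⟨le_trans hrfi_mem.1.le hx.1.le, hx.2⟩))
    intro x hx
    rw [interior_Ioo] at hx
    have hxI : x ∈ Set.Ioo (0:ℝ) 1 := ⟨lt_trans hrfi_mem.1 hx.1, hx.2⟩
    rw [(part2 x hxI).deriv]
    have h1 : rse x < x := hbelow x hx.1 hx.2
    have h2 : 0 < f x := hf_pos x ⟨hxI.1.le, hxI.2.le⟩
    have h3 : 0 < 1 - F x := by
      rw [← hA1 x ⟨hxI.1.le, hxI.2.le⟩]; exact hApos x ⟨hxI.1.le, hxI.2⟩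
    apply div_neg_of_neg_of_pos _ h3
    nlinarith
  exact ⟨rfi, hrfi_mem, hfix, huniq, habove, hmono, hbelow, hanti⟩
end

section
/- Let G be a continuous CDF on [0,1], n ≥ 1 an integer, s > 0, and r ∈ (0,1) with G(r) < 1 and ∫_{(r,1]} (v − r) dG(v) = s. Then Σ_{k=1}^{n} G(r)^{k−1} · (∫_{(r,1]} v dG(v) − s) + ∫_{[0,r)} v d(G(v)^n) = r − ∫_0^r G(v)^n dv, where d(G^n) is the Lebesgue–Stieltjes measure of v ↦ G(v)^n. Moreover, if V₁, …, V_n are i.i.d. random variables with CDF G, then E[max_{1≤i≤n} min{V_i, r}] = r − ∫_0^r G(v)^n dv, so the expected payoff of reservation-value search equals the expectation of the maximum of the truncated values min{V_i, r}. -/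
open MeasureTheory Set ProbabilityTheory
open MeasureTheory Set

lemma helper_split (F h : ℝ → ℝ) (r : ℝ) (hr : 0 < r)
    (hFh : ∀ t ∈ Ioo (0:ℝ) r, F t = h t) (hF0 : ∀ t ∈ Ioi r, F t = 0)
    (hint : IntegrableOn h (Ioo 0 r)) :
    ∫ t in Ioi (0:ℝ), F t = ∫ t in Ioc 0 r, h t := by
  have hunion : Ioo (0:ℝ) r ∪ Ici r = Ioi 0 := Ioo_union_Ici_eq_Ioi hr
  have hdisj : Disjoint (Ioo (0:ℝ) r) (Ici r) := by
    refine Set.disjoint_left.2 fun x hx hx' => absurd hx.2 (not_lt.2 hx')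
  have hintF1 : IntegrableOn F (Ioo 0 r) := by
    exact (hint.congr_fun (fun t ht => (hFh t ht).symm) measurableSet_Ioo : _)
  have hFzero : IntegrableOn F (Ioi r) := by
    refine (integrableOn_congr_fun hF0 measurableSet_Ioi).2 ?_
    exact integrableOn_zero
  have hintF2 : IntegrableOn F (Ici r) := by
    rw [IntegrableOn, Measure.restrict_congr_set Ioi_ae_eq_Ici.symm]
    exact hFzero
  rw [← hunion, setIntegral_union hdisj measurableSet_Ici hintF1 hintF2]
  have h2 : ∫ t in Ici r, F t = 0 := by
    rw [setIntegral_congr_set Ioi_ae_eq_Ici.symm]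
    rw [setIntegral_congr_fun measurableSet_Ioi hF0]
    simp
  have h1 : ∫ t in Ioo (0:ℝ) r, F t = ∫ t in Ioc 0 r, h t := by
    rw [setIntegral_congr_fun measurableSet_Ioo hFh, integral_Ioc_eq_integral_Ioo]
  rw [h1, h2, add_zero]
lemma stieltjes_ibp (H : StieltjesFunction ℝ) (hc : Continuous H) (r : ℝ) (hr : 0 < r) :
    ∫ v in Ioc (0:ℝ) r, v ∂H.measure = r * H r - ∫ t in Ioc (0:ℝ) r, H t := by
  set μ := H.measure.restrict (Ioc (0:ℝ) r) with hμ
  haveI : IsFiniteMeasure μ := by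
    constructor
    rw [hμ, Measure.restrict_apply_univ, H.measure_Ioc]
    exact ENNReal.ofReal_lt_top
  have hmem : ∀ᵐ v ∂μ, v ∈ Ioc (0:ℝ) r := ae_restrict_mem measurableSet_Ioc
  have hid_int : Integrable (fun v => v) μ := by
    refine Integrable.mono' (integrable_const r) measurable_id.aestronglyMeasurable ?_
    filter_upwards [hmem] with v hv
    rw [Real.norm_eq_abs, abs_of_pos hv.1]
    exact hv.2
  have hid_nn : 0 ≤ᵐ[μ] (fun v => v) := by
    filter_upwards [hmem] with v hv
    exact hv.1.le
  rw [show (∫ v in Ioc (0:ℝ) r, v ∂H.measure) = ∫ v, v ∂μ from rfl,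
    hid_int.integral_eq_integral_meas_lt hid_nn]
  have key : ∫ t in Ioi (0:ℝ), (μ {a : ℝ | t < a}).toReal
      = ∫ t in Ioc (0:ℝ) r, (H r - H t) := by
    apply helper_split _ _ r hr
    · intro t ht
      have hset : {a : ℝ | t < a} ∩ Ioc 0 r = Ioc t r := by
        ext v
        simp only [mem_inter_iff, mem_setOf_eq, mem_Ioc]
        constructor
        · rintro ⟨h1, _, h3⟩; exact ⟨h1, h3⟩
        · rintro ⟨h1, h2⟩; exact ⟨h1, ht.1.trans h1, h2⟩
      show ((H.measure.restrict (Ioc (0:ℝ) r)) (Ioi t)).toReal = _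
      rw [Measure.restrict_apply measurableSet_Ioi,
        show Ioi t ∩ Ioc 0 r = Ioc t r from hset,
        H.measure_Ioc, ENNReal.toReal_ofReal (sub_nonneg.2 (H.mono ht.2.le))]
    · intro t ht
      have hset : {a : ℝ | t < a} ∩ Ioc 0 r = ∅ := by
        ext v
        simp only [mem_inter_iff, mem_setOf_eq, mem_Ioc, mem_empty_iff_false, iff_false]
        rintro ⟨h1, _, h3⟩
        exact absurd (h3.trans_lt ht) (not_lt.2 h1.le)
      show ((H.measure.restrict (Ioc (0:ℝ) r)) (Ioi t)).toReal = 0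
      rw [Measure.restrict_apply measurableSet_Ioi,
        show Ioi t ∩ Ioc 0 r = ∅ from hset, measure_empty, ENNReal.toReal_zero]
    · exact (((continuous_const.sub hc).integrableOn_Icc : IntegrableOn _ (Icc (0:ℝ) r) volume).mono_set Ioo_subset_Icc_self)
  have hHint : IntegrableOn (fun t => H t) (Ioc 0 r) volume :=
    (hc.integrableOn_Icc : IntegrableOn _ (Icc (0:ℝ) r) volume).mono_set Ioc_subset_Icc_self
  have hcint : IntegrableOn (fun _ : ℝ => H r) (Ioc 0 r) volume :=
    integrableOn_const (by rw [Real.volume_Ioc]; exact ENNReal.ofReal_ne_top)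
  rw [show (∫ t in Ioi (0:ℝ), μ.real {a : ℝ | t < a}) = _ from key, integral_sub hcint hHint, setIntegral_const]
  rw [measureReal_def, Real.volume_Ioc, sub_zero, ENNReal.toReal_ofReal hr.le, smul_eq_mul]

/-- Consumer surplus as an order statistic. For a continuous CDF `G` on
`[0,1]`, `n ≥ 1`, and `r ∈ (0,1)` with `G r < 1` satisfying the search equation
`∫_{(r,1]} (v − r) dG = s`, the expected payoff of reservation-value search equals
`r − ∫_0^r G(v)^n dv`, which is also the expectation of `max_i min{V_i, r}` for `V_1, …, V_n`
i.i.d. with CDF `G`. -/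
theorem stmt10 (n : ℕ) (hn : 1 ≤ n) (G Gn : StieltjesFunction ℝ)
    (hGc : Continuous (G : ℝ → ℝ))
    (hG0 : ∀ v ≤ (0 : ℝ), G v = 0) (hG1 : ∀ v, (1 : ℝ) ≤ v → G v = 1)
    (hGn : ∀ v, Gn v = (G v) ^ n)
    (s r : ℝ) (hs : 0 < s) (hr : r ∈ Set.Ioo (0 : ℝ) 1) (hGr : G r < 1)
    (hsearch : (∫ v in Set.Ioc r 1, (v - r) ∂G.measure) = s) :
    ((∑ k ∈ Finset.range n, (G r) ^ k) * ((∫ v in Set.Ioc r 1, v ∂G.measure) - s)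
        + (∫ v in Set.Ico (0 : ℝ) r, v ∂Gn.measure))
      = r - (∫ v in (0 : ℝ)..r, (G v) ^ n) ∧
    (∀ (Ω : Type) (mΩ : MeasurableSpace Ω) (P : Measure Ω), IsProbabilityMeasure P →
      ∀ V : Fin n → Ω → ℝ,
        (∀ i, Measurable (V i)) →
        iIndepFun V P →
        (∀ i x, P {ω | V i ω ≤ x} = ENNReal.ofReal (G x)) →
        (∫ ω, (⨆ i, min (V i ω) r) ∂P) = r - ∫ v in (0 : ℝ)..r, (G v) ^ n) := by
  obtain ⟨hr0, hr1⟩ := hr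
  have hG_nonneg : ∀ t : ℝ, 0 ≤ G t := by
    intro t
    rcases le_or_gt t 0 with h | h
    · rw [hG0 t h]
    · rw [← hG0 0 le_rfl]; exact G.mono h.le
  have hG_le_one : ∀ t : ℝ, G t ≤ 1 := by
    intro t
    rcases le_or_gt 1 t with h | h
    · rw [hG1 t h]
    · rw [← hG1 1 le_rfl]; exact G.mono h.le
  have hGnc : Continuous (Gn : ℝ → ℝ) := by
    have : (Gn : ℝ → ℝ) = fun v => (G v) ^ n := funext hGn
    rw [this]; exact hGc.pow n
  have hintG : ∫ t in Ioc (0:ℝ) r, Gn t = ∫ v in (0:ℝ)..r, (G v) ^ n := by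
    rw [intervalIntegral.integral_of_le hr0.le]
    exact setIntegral_congr_fun measurableSet_Ioc (fun t _ => hGn t)
  constructor
  · -- Part 1
    haveI : IsFiniteMeasure (G.measure.restrict (Ioc r 1)) := by
      constructor
      rw [Measure.restrict_apply_univ, G.measure_Ioc]
      exact ENNReal.ofReal_lt_top
    have hmem : ∀ᵐ v ∂G.measure.restrict (Ioc r 1), v ∈ Ioc r 1 :=
      ae_restrict_mem measurableSet_Ioc
    have hid : Integrable (fun v => v) (G.measure.restrict (Ioc r 1)) := by
      refine Integrable.mono' (integrable_const 1) measurable_id.aestronglyMeasurable ?_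
      filter_upwards [hmem] with v hv
      rw [Real.norm_eq_abs, abs_of_pos (hr0.trans hv.1)]
      exact hv.2
    have hsub : Integrable (fun v => v - r) (G.measure.restrict (Ioc r 1)) :=
      hid.sub (integrable_const r)
    have hAs : (∫ v in Ioc r 1, v ∂G.measure) - s = r * (1 - G r) := by
      rw [← hsearch, ← integral_sub hid hsub]
      simp only [sub_sub_cancel]
      rw [setIntegral_const, smul_eq_mul, measureReal_def, G.measure_Ioc, hG1 1 le_rfl,
        ENNReal.toReal_ofReal (sub_nonneg.2 hGr.le), mul_comm]
    have hsing : ∀ a : ℝ, Gn.measure {a} = 0 := by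
      intro a
      rw [Gn.measure_singleton,
        leftLim_eq_of_tendsto (hGnc.continuousWithinAt),
        sub_self, ENNReal.ofReal_zero]
    have hae : (Ico (0:ℝ) r : Set ℝ) =ᵐ[Gn.measure] Ioc 0 r := by
      rw [MeasureTheory.ae_eq_set]
      constructor
      · refine measure_mono_null (fun x hx => ?_) (hsing 0)
        simp only [mem_diff, mem_Ico, mem_Ioc, not_and, not_le] at hx
        have : x ≤ 0 := by
          by_contra hc
          push_neg at hc
          exact absurd (hx.2 hc) (not_lt.2 hx.1.2.le)
        exact mem_singleton_iff.2 (le_antisymm this hx.1.1)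
      · refine measure_mono_null (fun x hx => ?_) (hsing r)
        simp only [mem_diff, mem_Ioc, mem_Ico, not_and, not_lt] at hx
        exact mem_singleton_iff.2 (le_antisymm hx.1.2 (hx.2 hx.1.1.le))
    have hIco : (∫ v in Ico (0:ℝ) r, v ∂Gn.measure) = ∫ v in Ioc (0:ℝ) r, v ∂Gn.measure :=
      setIntegral_congr_set hae
    rw [hAs, hIco, stieltjes_ibp Gn hGnc r hr0, hGn r, hintG]
    have hsum : (∑ k ∈ Finset.range n, (G r) ^ k) * (r * (1 - G r))
        = r * (1 - (G r) ^ n) := by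
      have hg := geom_sum_mul (G r) n
      calc (∑ k ∈ Finset.range n, (G r) ^ k) * (r * (1 - G r))
          = -((∑ k ∈ Finset.range n, (G r) ^ k) * (G r - 1)) * r := by ring
        _ = -((G r) ^ n - 1) * r := by rw [hg]
        _ = r * (1 - (G r) ^ n) := by ring
    rw [hsum]
    ring
  · -- Part 2
    intro Ω mΩ P hP V hVm hVind hVcdf
    haveI := hP
    haveI : Nonempty (Fin n) := ⟨⟨0, hn⟩⟩
    set X : Ω → ℝ := fun ω => ⨆ i, min (V i ω) r with hX
    have hXsup : X = fun ω => Finset.univ.sup' Finset.univ_nonempty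
        (fun i => min (V i ω) r) := by
      funext ω
      rw [Finset.sup'_univ_eq_ciSup]
    have hXm : Measurable X := by
      have h := Finset.measurable_sup' (s := (Finset.univ : Finset (Fin n)))
        Finset.univ_nonempty (f := fun i ω => min (V i ω) r)
        (fun i _ => (hVm i).min measurable_const)
      rw [hXsup, show (fun ω => Finset.univ.sup' Finset.univ_nonempty
        (fun i => min (V i ω) r)) = Finset.univ.sup' Finset.univ_nonempty
        (fun i ω => min (V i ω) r) from funext fun ω => (Finset.sup'_apply Finset.univ_nonempty (fun i ω => min (V i ω) r) ω).symm]
      exact h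
    have hXler : ∀ ω, X ω ≤ r := fun ω => ciSup_le fun i => min_le_right _ _
    have hbdd : ∀ ω, BddAbove (Set.range fun i => min (V i ω) r) :=
      fun ω => Set.Finite.bddAbove (Set.finite_range _)
    have hXiff : ∀ t, t < r → ∀ ω, (X ω ≤ t ↔ ∀ i, V i ω ≤ t) := by
      intro t ht ω
      constructor
      · intro h i
        have h1 : min (V i ω) r ≤ t := (le_ciSup (hbdd ω) i).trans h
        exact (min_le_iff.1 h1).resolve_right (not_le.2 ht)
      · intro h
        exact ciSup_le fun i => min_le_of_left_le (h i)
    have hmeasle : ∀ t : ℝ, MeasurableSet {ω | X ω ≤ t} :=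
      fun t => hXm measurableSet_Iic
    have hcdfX : ∀ t ∈ Ioo (0:ℝ) r, P {ω | X ω ≤ t} = ENNReal.ofReal ((G t) ^ n) := by
      intro t ht
      have hset : {ω | X ω ≤ t} = ⋂ i, V i ⁻¹' Iic t := by
        ext ω
        simp only [mem_setOf_eq, mem_iInter, mem_preimage, mem_Iic]
        exact hXiff t ht.2 ω
      have hprod := hVind.measure_inter_preimage_eq_mul
        (S := Finset.univ) (sets := fun _ => Iic t) (fun i _ => measurableSet_Iic)
      rw [hset, show (⋂ i, V i ⁻¹' Iic t) = ⋂ i ∈ Finset.univ, V i ⁻¹' Iic t by simp,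
        hprod]
      have hterm : ∀ i : Fin n, P (V i ⁻¹' (fun _ : Fin n => Iic t) i)
          = ENNReal.ofReal (G t) := fun i => hVcdf i t
      rw [Finset.prod_congr rfl (fun i _ => hterm i), Finset.prod_const,
        Finset.card_univ, Fintype.card_fin, ← ENNReal.ofReal_pow (hG_nonneg t)]
    have hae0 : ∀ᵐ ω ∂P, 0 < V ⟨0, hn⟩ ω := by
      rw [ae_iff]
      have : {ω | ¬ 0 < V ⟨0, hn⟩ ω} = {ω | V ⟨0, hn⟩ ω ≤ 0} := by
        ext ω; simp [not_lt]
      rw [this, hVcdf, hG0 0 le_rfl, ENNReal.ofReal_zero]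
    have hXnn : 0 ≤ᵐ[P] X := by
      filter_upwards [hae0] with ω hω
      have h1 : min (V ⟨0, hn⟩ ω) r ≤ X ω := le_ciSup (hbdd ω) _
      have h2 : 0 < min (V ⟨0, hn⟩ ω) r := lt_min hω hr0
      show (0:ℝ) ≤ X ω
      linarith
    have hXint : Integrable X P := by
      refine Integrable.mono' (integrable_const r) hXm.aestronglyMeasurable ?_
      filter_upwards [hXnn] with ω hω
      rw [Real.norm_eq_abs, abs_of_nonneg hω]
      exact hXler ω
    rw [show (∫ ω, (⨆ i, min (V i ω) r) ∂P) = ∫ ω, X ω ∂P from rfl,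
      hXint.integral_eq_integral_meas_lt hXnn]
    have key : ∫ t in Ioi (0:ℝ), (P {a | t < X a}).toReal
        = ∫ t in Ioc (0:ℝ) r, (1 - (G t) ^ n) := by
      apply helper_split _ _ r hr0
      · intro t ht
        have hcompl : {a | t < X a} = {ω | X ω ≤ t}ᶜ := by
          ext ω; simp [not_le]
        rw [hcompl, prob_compl_eq_one_sub (hmeasle t), hcdfX t ht,
          ENNReal.toReal_sub_of_le
            (ENNReal.ofReal_le_one.2 (pow_le_one₀ (hG_nonneg t) (hG_le_one t)))
            ENNReal.one_ne_top,
          ENNReal.toReal_one, ENNReal.toReal_ofReal (pow_nonneg (hG_nonneg t) n)]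
      · intro t ht
        have : {a | t < X a} = ∅ := by
          ext ω
          simp only [mem_setOf_eq, mem_empty_iff_false, iff_false, not_lt]
          exact (hXler ω).trans ht.le
        rw [this, measure_empty, ENNReal.toReal_zero]
      · exact (((continuous_const.sub (hGc.pow n)).integrableOn_Icc :
          IntegrableOn _ (Icc (0:ℝ) r) volume).mono_set Ioo_subset_Icc_self)
    rw [show (∫ t in Ioi (0:ℝ), P.real {a | t < X a}) = _ from key]
    have hGn_int : IntegrableOn (fun t => (G t) ^ n) (Ioc (0:ℝ) r) volume :=
      (((hGc.pow n).integrableOn_Icc : IntegrableOn _ (Icc (0:ℝ) r) volume).mono_set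
        Ioc_subset_Icc_self)
    have hcint : IntegrableOn (fun _ : ℝ => (1:ℝ)) (Ioc (0:ℝ) r) volume :=
      integrableOn_const (by rw [Real.volume_Ioc]; exact ENNReal.ofReal_ne_top)
    rw [integral_sub hcint hGn_int, setIntegral_const, smul_eq_mul, mul_one,
      measureReal_def, Real.volume_Ioc, sub_zero, ENNReal.toReal_ofReal hr0.le,
      intervalIntegral.integral_of_le hr0.le]
end

section
/- Fix α ∈ (0,1) and s ∈ (0, μ), and let n̲ ≥ 2 be the finite threshold such that the unique symmetric equilibrium (G_n, r_n) with endogenous reservation value (search cost s) has v_L*(n) = 0 if and only if n ≥ n̲. Then for all integers n, n' with n̲ ≤ n < n', the equilibrium distribution G_n is an MPC of G_{n'} and G_n ≠ G_{n'}; that is, equilibrium informativeness (in the sense that a less dispersed posterior-mean distribution is an MPC of a more dispersed one) is strictly increasing in the number of firms n on [n̲, ∞). -/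
open MeasureTheory Set Filter

/-- `η = (1/n) Σ_{k=0}^{n-1} G(r)^k`, the probability that a firm is visited by an
inexperienced consumer. -/
noncomputable def eta (n : ℕ) (Gr : ℝ) : ℝ :=
  (1 / (n : ℝ)) * ∑ k ∈ Finset.range n, Gr ^ k

/-- `α̃ = αη / (αη + 1 - α)`, the posterior probability that a visiting consumer is
inexperienced. -/
noncomputable def alphaTilde (α η : ℝ) : ℝ :=
  α * η / (α * η + (1 - α))

/-- The payoff (probability of sale) of a firm with realized posterior mean `v`, when all
other firms use disclosure `G` and the inexperienced reservation value is `r`. -/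
noncomputable def payoff (α : ℝ) (n : ℕ) (r : ℝ) (G : ℝ → ℝ) (v : ℝ) : ℝ :=
  if v < r then
    (alphaTilde α (eta n (G r)) / eta n (G r) + (1 - alphaTilde α (eta n (G r))))
      * G v ^ (n - 1)
  else
    alphaTilde α (eta n (G r)) + (1 - alphaTilde α (eta n (G r))) * G v ^ (n - 1)

/-- `G` is a symmetric equilibrium with reservation value `r`: `G` is a continuous CDF on
`[0,1]` that is an MPC of `F`, and no MPC of `F` yields a strictly higher expected payoff
against the payoff function generated by `G`. -/
def IsSymEq (F : ℝ → ℝ) (α : ℝ) (n : ℕ) (r : ℝ) (G : StieltjesFunction ℝ) : Prop :=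
  Continuous (G : ℝ → ℝ) ∧ IsCDF01 G ∧ MPCof (G : ℝ → ℝ) F ∧
  ∀ Gh : StieltjesFunction ℝ, IsCDF01 Gh → MPCof (Gh : ℝ → ℝ) F →
    (∫ v in Set.Icc (0 : ℝ) 1, payoff α n r (G : ℝ → ℝ) v ∂Gh.measure) ≤
      ∫ v in Set.Icc (0 : ℝ) 1, payoff α n r (G : ℝ → ℝ) v ∂G.measure

open Topology


lemma convexOn_affine (a b : ℝ) : ConvexOn ℝ (Icc (0:ℝ) 1) (fun v => a * v + b) := by
  refine ⟨convex_Icc 0 1, ?_⟩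
  intro x _ y _ p q hp hq hpq
  simp only [smul_eq_mul]
  have hq' : q = 1 - p := by linarith
  subst hq'; exact le_of_eq (by ring)

lemma min_rpow {a e : ℝ} (ha : 0 ≤ a) (he : 0 < e) : min a 1 ^ e = min (a ^ e) 1 := by
  rcases le_or_gt a 1 with h | h
  · rw [min_eq_left h, min_eq_left (Real.rpow_le_one ha h he.le)]
  · rw [min_eq_right h.le, Real.one_rpow,
      min_eq_right (Real.one_le_rpow h.le he.le)]

lemma rpowk_le_iff {k : ℕ} (hk : k ≠ 0) {a c : ℝ} (ha : 0 ≤ a) (hc : 0 ≤ c) :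
    a ^ ((k:ℝ))⁻¹ ≤ c ↔ a ≤ c ^ k := by
  constructor
  · intro h
    calc a = (a ^ ((k:ℝ))⁻¹) ^ k := (Real.rpow_inv_natCast_pow ha hk).symm
    _ ≤ c ^ k := pow_le_pow_left₀ (Real.rpow_nonneg ha _) h k
  · intro h
    calc a ^ ((k:ℝ))⁻¹ ≤ (c ^ k) ^ ((k:ℝ))⁻¹ :=
          Real.rpow_le_rpow ha h (by positivity)
    _ = c := Real.pow_rpow_inv_natCast hc hk

lemma le_rpowk_iff {k : ℕ} (hk : k ≠ 0) {a c : ℝ} (ha : 0 ≤ a) (hc : 0 ≤ c) :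
    c ≤ a ^ ((k:ℝ))⁻¹ ↔ c ^ k ≤ a := by
  constructor
  · intro h
    calc c ^ k ≤ (a ^ ((k:ℝ))⁻¹) ^ k := pow_le_pow_left₀ hc h k
    _ = a := Real.rpow_inv_natCast_pow ha hk
  · intro h
    calc c = (c ^ k) ^ ((k:ℝ))⁻¹ := (Real.pow_rpow_inv_natCast hc hk).symm
    _ ≤ a ^ ((k:ℝ))⁻¹ := Real.rpow_le_rpow (by positivity) h (by positivity)

lemma lt_rpowk_iff {k : ℕ} (hk : k ≠ 0) {a c : ℝ} (ha : 0 ≤ a) (hc : 0 ≤ c) :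
    c < a ^ ((k:ℝ))⁻¹ ↔ c ^ k < a :=
  lt_iff_lt_of_le_iff_le (rpowk_le_iff hk ha hc)

lemma rpowk_lt_iff {k : ℕ} (hk : k ≠ 0) {a c : ℝ} (ha : 0 ≤ a) (hc : 0 ≤ c) :
    a ^ ((k:ℝ))⁻¹ < c ↔ a < c ^ k :=
  lt_iff_lt_of_le_iff_le (le_rpowk_iff hk ha hc)

lemma ratio_lemma {β β' κ κ' t t' : ℝ} (hβ : 0 < β) (hβ' : 0 < β') (hκ : 0 < κ)
    (hκκ' : κ ≤ κ') (ht : 0 < t) (htt' : t ≤ t')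
    (h : (β' * t) ^ κ'⁻¹ < (β * t) ^ κ⁻¹) :
    (β' * t') ^ κ'⁻¹ < (β * t') ^ κ⁻¹ := by
  have ht' : 0 < t' := lt_of_lt_of_le ht htt'
  have hc1 : (1:ℝ) ≤ t' / t := (one_le_div ht).mpr htt'
  have hκ' : 0 < κ' := lt_of_lt_of_le hκ hκκ'
  have e1 : (β' * t') ^ κ'⁻¹ = (β' * t) ^ κ'⁻¹ * (t'/t) ^ κ'⁻¹ := by
    rw [← Real.mul_rpow (by positivity) (by positivity)]
    congr 1; field_simp
  have e2 : (β * t') ^ κ⁻¹ = (β * t) ^ κ⁻¹ * (t'/t) ^ κ⁻¹ := by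
    rw [← Real.mul_rpow (by positivity) (by positivity)]
    congr 1; field_simp
  rw [e1, e2]
  have hle : (t'/t) ^ κ'⁻¹ ≤ (t'/t) ^ κ⁻¹ :=
    Real.rpow_le_rpow_of_exponent_le hc1 (by
      apply inv_anti₀ hκ hκκ')
  exact mul_lt_mul h hle (by positivity) (by positivity)

lemma exponent_eq {β β' κ κ' t : ℝ} (hβ : 0 < β) (hβ' : 0 < β') (hκ : 0 < κ) (hκ' : 0 < κ')
    (ht : 0 < t)
    (h1 : (β * t) ^ κ⁻¹ = (β' * t) ^ κ'⁻¹)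
    (h2 : (β * (t/2)) ^ κ⁻¹ = (β' * (t/2)) ^ κ'⁻¹) : κ = κ' := by
  have e1 : (β * t) ^ κ⁻¹ = (β * (t/2)) ^ κ⁻¹ * (2:ℝ) ^ κ⁻¹ := by
    rw [← Real.mul_rpow (by positivity) (by positivity)]
    congr 1; ring
  have e2 : (β' * t) ^ κ'⁻¹ = (β' * (t/2)) ^ κ'⁻¹ * (2:ℝ) ^ κ'⁻¹ := by
    rw [← Real.mul_rpow (by positivity) (by positivity)]
    congr 1; ring
  have hpos : (0:ℝ) < (β' * (t/2)) ^ κ'⁻¹ := Real.rpow_pos_of_pos (by positivity) _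
  have key : (2:ℝ) ^ κ⁻¹ = (2:ℝ) ^ κ'⁻¹ := by
    have := h1
    rw [e1, e2, h2] at this
    exact mul_left_cancel₀ (ne_of_gt hpos) this
  have hinv : κ⁻¹ = κ'⁻¹ := by
    by_contra hne
    rcases lt_or_gt_of_ne hne with h | h
    · have := (Real.rpow_lt_rpow_left_iff (x := (2:ℝ)) one_lt_two).mpr h
      rw [key] at this; exact lt_irrefl _ this
    · have := (Real.rpow_lt_rpow_left_iff (x := (2:ℝ)) one_lt_two).mpr h
      rw [key] at this; exact lt_irrefl _ this
  exact inv_injective hinv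

lemma convex_pos_right {D : ℝ → ℝ} (hD : ConvexOn ℝ (Icc (0:ℝ) 1) D) {u m w : ℝ}
    (hu : u ∈ Icc (0:ℝ) 1) (hw : w ∈ Icc (0:ℝ) 1) (hm : m ∈ Icc (0:ℝ) 1)
    (hum : u < m) (hmw : m < w) (hDu : D u < 0) (hDm : 0 ≤ D m) : 0 < D w := by
  have hwu : 0 < w - u := by linarith
  have ha : 0 < (w - m)/(w - u) := div_pos (by linarith) hwu
  have hb : 0 < (m - u)/(w - u) := div_pos (by linarith) hwu
  have hab : (w - m)/(w - u) + (m - u)/(w - u) = 1 := by field_simp; ring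
  have hineq := hD.2 hu hw ha.le hb.le hab
  have hcomb : ((w - m)/(w - u)) • u + ((m - u)/(w - u)) • w = m := by
    simp only [smul_eq_mul]; field_simp; ring
  rw [hcomb] at hineq
  simp only [smul_eq_mul] at hineq
  set a := (w - m)/(w - u)
  set b := (m - u)/(w - u)
  by_contra hle
  push_neg at hle
  nlinarith [mul_nonpos_of_nonneg_of_nonpos hb.le hle, mul_neg_of_pos_of_neg ha hDu]

lemma convex_neg_mid {D : ℝ → ℝ} (hD : ConvexOn ℝ (Icc (0:ℝ) 1) D) {u m w : ℝ}
    (hu : u ∈ Icc (0:ℝ) 1) (hw : w ∈ Icc (0:ℝ) 1)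
    (hum : u < m) (hmw : m < w) (hDu : D u < 0) (hDw : D w ≤ 0) : D m < 0 := by
  have hwu : 0 < w - u := by linarith
  have ha : 0 < (w - m)/(w - u) := div_pos (by linarith) hwu
  have hb : 0 < (m - u)/(w - u) := div_pos (by linarith) hwu
  have hab : (w - m)/(w - u) + (m - u)/(w - u) = 1 := by field_simp; ring
  have hineq := hD.2 hu hw ha.le hb.le hab
  have hcomb : ((w - m)/(w - u)) • u + ((m - u)/(w - u)) • w = m := by
    simp only [smul_eq_mul]; field_simp; ring
  rw [hcomb] at hineq
  simp only [smul_eq_mul] at hineq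
  set a := (w - m)/(w - u)
  set b := (m - u)/(w - u)
  nlinarith [mul_neg_of_pos_of_neg ha hDu, mul_nonpos_of_nonneg_of_nonpos hb.le hDw]

lemma zero_of_nonneg_integral_zero {φ : ℝ → ℝ} (hc : Continuous φ) {a b : ℝ} (hab : a < b)
    (h0 : ∀ x ∈ Icc a b, 0 ≤ φ x) (hI : (∫ x in a..b, φ x) = 0) :
    ∀ x ∈ Ioo a b, φ x = 0 := by
  intro x0 hx0
  by_contra hne
  have hc0 : 0 < φ x0 := lt_of_le_of_ne (h0 x0 (Ioo_subset_Icc_self hx0)) (Ne.symm hne)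
  have hmem : x0 ∈ φ ⁻¹' (Ioi (φ x0 / 2)) := by
    simp only [mem_preimage, mem_Ioi]; linarith
  obtain ⟨ε, hε, hball⟩ := Metric.isOpen_iff.mp (isOpen_Ioi.preimage hc) x0 hmem
  set m := min (ε/2) (min ((x0 - a)/2) ((b - x0)/2)) with hm_def
  have hm : 0 < m := by
    refine lt_min (by linarith) (lt_min ?_ ?_) <;> [linarith [hx0.1]; linarith [hx0.2]]
  have hma : a < x0 - m := by
    have : m ≤ (x0 - a)/2 := le_trans (min_le_right _ _) (min_le_left _ _)
    linarith [hx0.1]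
  have hmb : x0 + m < b := by
    have : m ≤ (b - x0)/2 := le_trans (min_le_right _ _) (min_le_right _ _)
    linarith [hx0.2]
  have hmε : m < ε := by
    have : m ≤ ε/2 := min_le_left _ _
    linarith
  have hlow : ∀ x ∈ Icc (x0 - m) (x0 + m), φ x0 / 2 ≤ φ x := by
    intro x hx
    have : x ∈ Metric.ball x0 ε := by
      rw [Metric.mem_ball, Real.dist_eq]
      rw [abs_lt]
      constructor <;> [linarith [hx.1]; linarith [hx.2]]
    exact le_of_lt (hball this)
  have hii : ∀ u v : ℝ, IntervalIntegrable φ volume u v := fun u v =>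
    hc.intervalIntegrable u v
  have e1 : (∫ x in a..(x0-m), φ x) + (∫ x in (x0-m)..(x0+m), φ x)
      = ∫ x in a..(x0+m), φ x :=
    intervalIntegral.integral_add_adjacent_intervals (hii _ _) (hii _ _)
  have e2 : (∫ x in a..(x0+m), φ x) + (∫ x in (x0+m)..b, φ x) = ∫ x in a..b, φ x :=
    intervalIntegral.integral_add_adjacent_intervals (hii _ _) (hii _ _)
  have b1 : 0 ≤ ∫ x in a..(x0-m), φ x :=
    intervalIntegral.integral_nonneg (by linarith) (fun u hu => h0 u ⟨hu.1, by linarith [hu.2]⟩)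
  have b3 : 0 ≤ ∫ x in (x0+m)..b, φ x :=
    intervalIntegral.integral_nonneg (by linarith) (fun u hu => h0 u ⟨by linarith [hu.1], hu.2⟩)
  have b2 : (2*m) * (φ x0/2) ≤ ∫ x in (x0-m)..(x0+m), φ x := by
    have hmono := intervalIntegral.integral_mono_on (by linarith : x0 - m ≤ x0 + m)
      (intervalIntegrable_const) (hii _ _) hlow
    rw [intervalIntegral.integral_const] at hmono
    calc (2*m) * (φ x0/2) = ((x0 + m) - (x0 - m)) • (φ x0 / 2) := by
          simp only [smul_eq_mul]; ring
    _ ≤ _ := hmono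
  nlinarith

lemma layercake (G : StieltjesFunction ℝ) (hGcont : Continuous (G : ℝ → ℝ)) (hG1 : G 1 = 1)
    {ρ : ℝ} (hρ : ρ ≤ 1) :
    (∫ v in Set.Ioc ρ 1, (v - ρ) ∂G.measure) = ∫ t in ρ..1, (1 - G t) := by
  set ν := G.measure with hν
  set μ1 := ν.restrict (Ioc ρ 1) with hμ1
  set μ2 := (volume : Measure ℝ).restrict (Ioc ρ 1) with hμ2
  have hS : MeasurableSet {p : ℝ × ℝ | p.2 < p.1} :=
    measurableSet_lt measurable_snd measurable_fst
  have key1 : ∫⁻ v, ENNReal.ofReal (v - ρ) ∂μ1 = μ1.prod μ2 {p : ℝ × ℝ | p.2 < p.1} := by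
    rw [Measure.prod_apply hS]
    refine (lintegral_congr_ae ?_).symm
    filter_upwards [ae_restrict_mem measurableSet_Ioc] with v hv
    have h1 : (Prod.mk v ⁻¹' {p : ℝ × ℝ | p.2 < p.1}) = Iio v := rfl
    rw [h1, hμ2, Measure.restrict_apply measurableSet_Iio]
    have h2 : Iio v ∩ Ioc ρ 1 = Ioo ρ v := by
      ext t
      simp only [mem_inter_iff, mem_Iio, mem_Ioc, mem_Ioo]
      constructor
      · rintro ⟨h, h', _⟩; exact ⟨h', h⟩
      · rintro ⟨h, h'⟩; exact ⟨h', h, le_trans h'.le hv.2⟩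
    rw [h2, Real.volume_Ioo]
  have key2 : μ1.prod μ2 {p : ℝ × ℝ | p.2 < p.1}
      = ∫⁻ t, ENNReal.ofReal (1 - G t) ∂μ2 := by
    rw [Measure.prod_apply_symm hS]
    refine lintegral_congr_ae ?_
    filter_upwards [ae_restrict_mem measurableSet_Ioc] with t ht
    have h1 : ((fun v => (v, t)) ⁻¹' {p : ℝ × ℝ | p.2 < p.1}) = Ioi t := rfl
    rw [h1, hμ1, Measure.restrict_apply measurableSet_Ioi]
    have h2 : Ioi t ∩ Ioc ρ 1 = Ioc t 1 := by
      ext v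
      simp only [mem_inter_iff, mem_Ioi, mem_Ioc]
      constructor
      · rintro ⟨h, _, h''⟩; exact ⟨h, h''⟩
      · rintro ⟨h, h'⟩; exact ⟨h, lt_trans ht.1 h, h'⟩
    rw [h2, hν, G.measure_Ioc, hG1]
  have int1 : IntegrableOn (fun v => v - ρ) (Ioc ρ 1) ν :=
    ((continuous_id.sub continuous_const).integrableOn_Icc).mono_set Ioc_subset_Icc_self
  have nn1 : 0 ≤ᵐ[μ1] fun v => v - ρ := by
    filter_upwards [ae_restrict_mem measurableSet_Ioc] with v hv
    simp only [Pi.zero_apply]; linarith [hv.1]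
  have int2 : IntegrableOn (fun t => 1 - G t) (Ioc ρ 1) volume :=
    ((continuous_const.sub hGcont).integrableOn_Icc).mono_set Ioc_subset_Icc_self
  have nn2 : 0 ≤ᵐ[μ2] fun t => 1 - G t := by
    filter_upwards [ae_restrict_mem measurableSet_Ioc] with t ht
    simp only [Pi.zero_apply]
    have : G t ≤ G 1 := G.mono ht.2
    linarith [hG1 ▸ this]
  have main := (ofReal_integral_eq_lintegral_ofReal int1 nn1).trans
    (key1.trans (key2.trans (ofReal_integral_eq_lintegral_ofReal int2 nn2).symm))
  have h1 : 0 ≤ ∫ v in Ioc ρ 1, (v - ρ) ∂ν :=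
    setIntegral_nonneg measurableSet_Ioc (fun v hv => by linarith [hv.1])
  have h2 : 0 ≤ ∫ t in Ioc ρ 1, (1 - G t) :=
    setIntegral_nonneg measurableSet_Ioc (fun t ht => by
      have : G t ≤ G 1 := G.mono ht.2
      linarith [hG1 ▸ this])
  have := (ENNReal.ofReal_eq_ofReal_iff h1 h2).mp main
  rw [intervalIntegral.integral_of_le hρ]
  exact this

lemma GM_eq {F Gn : ℝ → ℝ} (hFc : ContinuousOn F (Icc 0 1)) (hGc : Continuous Gn)
    {M : ℝ} (hM0 : 0 ≤ M) (hM1 : M < 1)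
    (hGtop : ∀ v, M < v → v ≤ 1 → Gn v = F v) : Gn M = F M := by
  have hne : (𝓝[Ioc M 1] M).NeBot := by
    rw [nhdsWithin_Ioc_eq_nhdsGT hM1]; infer_instance
  have h1 : Tendsto Gn (𝓝[Ioc M 1] M) (𝓝 (Gn M)) :=
    (hGc.tendsto M).mono_left nhdsWithin_le_nhds
  have h2 : Tendsto F (𝓝[Ioc M 1] M) (𝓝 (F M)) := by
    have hcw := hFc M ⟨hM0, hM1.le⟩
    exact hcw.mono_left (nhdsWithin_mono M (fun x hx => ⟨le_trans hM0 hx.1.le, hx.2⟩))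
  have heq : Gn =ᶠ[𝓝[Ioc M 1] M] F :=
    eventually_nhdsWithin_of_forall (fun x hx => hGtop x hx.1 hx.2)
  exact tendsto_nhds_unique (h1.congr' heq) h2

lemma structDM
    {F : ℝ → ℝ} (hF1 : F 1 = 1) (hFlt1 : ∀ v, 0 ≤ v → v < 1 → F v < 1)
    (hFc : ContinuousOn F (Icc 0 1))
    {ρ : ℝ} (hρ0 : 0 < ρ)
    {k : ℕ} (hk : k ≠ 0) {β M : ℝ} (hβ : 0 < β) (hρM : ρ < M) (hM1 : M ≤ 1)
    {Gn : ℝ → ℝ} (hGc : Continuous Gn)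
    (hGmid : ∀ v, ρ ≤ v → v ≤ M → Gn v = (min (β*(v-ρ)) 1) ^ ((k:ℝ))⁻¹)
    (hGtop : ∀ v, M < v → v ≤ 1 → Gn v = F v)
    (hG1 : Gn 1 = 1) : F M ^ k ≤ β * (M - ρ) := by
  have hM0 : (0:ℝ) ≤ M := by linarith
  rcases eq_or_lt_of_le hM1 with hM | hM
  · have hform := hGmid 1 (by linarith) (le_of_eq hM.symm)
    have hmin : min (β*((1:ℝ)-ρ)) 1 = 1 := by
      by_contra hne
      have hnn : 0 ≤ min (β*((1:ℝ)-ρ)) 1 :=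
        le_min (by nlinarith) zero_le_one
      have hlt : min (β*((1:ℝ)-ρ)) 1 < 1 := lt_of_le_of_ne (min_le_right _ _) hne
      have := Real.rpow_lt_one hnn hlt (by positivity : (0:ℝ) < ((k:ℝ))⁻¹)
      rw [← hform, hG1] at this
      exact lt_irrefl _ this
    have hge : (1:ℝ) ≤ β*((1:ℝ)-ρ) := min_eq_right_iff.mp hmin
    subst hM
    rw [hF1, one_pow]
    exact hge
  · have hGM : Gn M = F M := GM_eq hFc hGc hM0 hM hGtop
    have hform := hGmid M hρM.le le_rfl
    have hFM1 : F M < 1 := hFlt1 M hM0 hM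
    by_cases hcap : β*(M-ρ) ≤ 1
    · rw [min_eq_left hcap] at hform
      have hnn : (0:ℝ) ≤ β*(M-ρ) := by nlinarith
      have : F M ^ k = β*(M-ρ) := by
        rw [hGM] at hform
        rw [hform]
        exact Real.rpow_inv_natCast_pow hnn hk
      exact le_of_eq this
    · push_neg at hcap
      exfalso
      rw [min_eq_right hcap.le, Real.one_rpow] at hform
      rw [hGM] at hform
      linarith

lemma exists_above
    {F : ℝ → ℝ} (hFc : ContinuousOn F (Icc 0 1))
    (hFpos : ∀ v, 0 < v → v ≤ 1 → 0 < F v)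
    {ρ M : ℝ} (hρ0 : 0 < ρ) (hρM : ρ < M) (hM1 : M ≤ 1)
    {Gn : ℝ → ℝ} (hGc : Continuous Gn)
    (hG0 : ∀ v, v ≤ ρ → Gn v = 0)
    (hGM : M < 1 → Gn M = F M)
    (hGtop : ∀ v, M < v → v ≤ 1 → Gn v = F v)
    (hA0 : (∫ v in (0:ℝ)..1, (F v - Gn v)) = 0) :
    ∃ x ∈ Ioo ρ M, F x < Gn x := by
  have hρ1 : ρ < 1 := lt_of_lt_of_le hρM hM1
  have h0mem : (0:ℝ) ∈ Icc (0:ℝ) 1 := ⟨le_rfl, zero_le_one⟩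
  have h1mem : (1:ℝ) ∈ Icc (0:ℝ) 1 := ⟨zero_le_one, le_rfl⟩
  have hρmem : ρ ∈ Icc (0:ℝ) 1 := ⟨hρ0.le, hρ1.le⟩
  have hMmem : M ∈ Icc (0:ℝ) 1 := ⟨by linarith, hM1⟩
  have hFii : ∀ a b : ℝ, a ∈ Icc (0:ℝ) 1 → b ∈ Icc (0:ℝ) 1 →
      IntervalIntegrable F volume a b := fun a b ha hb =>
    (hFc.mono (uIcc_subset_Icc ha hb)).intervalIntegrable
  have hGii : ∀ a b : ℝ, IntervalIntegrable Gn volume a b := fun a b =>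
    hGc.intervalIntegrable a b
  have hIpos : 0 < ∫ v in (0:ℝ)..ρ, F v :=
    intervalIntegral.intervalIntegral_pos_of_pos_on (hFii 0 ρ h0mem hρmem)
      (fun x hx => hFpos x hx.1 (le_of_lt (lt_trans hx.2 hρ1))) hρ0
  have e0 : (∫ v in (0:ℝ)..ρ, (F v - Gn v)) = ∫ v in (0:ℝ)..ρ, F v := by
    apply intervalIntegral.integral_congr
    intro x hx
    rw [uIcc_of_le hρ0.le] at hx
    simp [hG0 x hx.2]
  have eM : (∫ v in M..1, (F v - Gn v)) = 0 := by
    rcases eq_or_lt_of_le hM1 with h | h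
    · rw [h, intervalIntegral.integral_same]
    · have : (∫ v in M..1, (F v - Gn v)) = ∫ v in M..1, (0:ℝ) := by
        apply intervalIntegral.integral_congr
        intro x hx
        rw [uIcc_of_le hM1] at hx
        rcases eq_or_lt_of_le hx.1 with hxe | hxl
        · rw [← hxe]
          simp [hGM h]
        · simp [hGtop x hxl hx.2]
      rw [this, intervalIntegral.integral_zero]
  have a1 : (∫ v in (0:ℝ)..ρ, (F v - Gn v)) + (∫ v in ρ..M, (F v - Gn v))
      = ∫ v in (0:ℝ)..M, (F v - Gn v) :=
    intervalIntegral.integral_add_adjacent_intervals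
      ((hFii 0 ρ h0mem hρmem).sub (hGii 0 ρ)) ((hFii ρ M hρmem hMmem).sub (hGii ρ M))
  have a2 : (∫ v in (0:ℝ)..M, (F v - Gn v)) + (∫ v in M..1, (F v - Gn v))
      = ∫ v in (0:ℝ)..1, (F v - Gn v) :=
    intervalIntegral.integral_add_adjacent_intervals
      ((hFii 0 M h0mem hMmem).sub (hGii 0 M)) ((hFii M 1 hMmem h1mem).sub (hGii M 1))
  have emid : (∫ v in ρ..M, (F v - Gn v)) = -(∫ v in (0:ℝ)..ρ, F v) := by
    rw [hA0] at a2
    rw [e0] at a1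
    rw [eM] at a2
    linarith
  by_contra hcon
  push_neg at hcon
  have hnn : 0 ≤ ∫ v in ρ..M, (F v - Gn v) := by
    rw [intervalIntegral.integral_of_le (le_of_lt hρM), integral_Ioc_eq_integral_Ioo]
    exact setIntegral_nonneg measurableSet_Ioo (fun x hx => sub_nonneg.2 (hcon x hx))
  rw [emid] at hnn
  linarith

lemma structDMeq
    {F : ℝ → ℝ} (hFlt1 : ∀ v, 0 ≤ v → v < 1 → F v < 1)
    (hFc : ContinuousOn F (Icc 0 1))
    {ρ : ℝ} (hρ0 : 0 < ρ)
    {k : ℕ} (hk : k ≠ 0) {β M : ℝ} (hβ : 0 < β) (hρM : ρ < M) (hM1 : M < 1)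
    {Gn : ℝ → ℝ} (hGc : Continuous Gn)
    (hGmid : ∀ v, ρ ≤ v → v ≤ M → Gn v = (min (β*(v-ρ)) 1) ^ ((k:ℝ))⁻¹)
    (hGtop : ∀ v, M < v → v ≤ 1 → Gn v = F v) : F M ^ k = β * (M - ρ) := by
  have hM0 : (0:ℝ) ≤ M := by linarith
  have hGM : Gn M = F M := GM_eq hFc hGc hM0 hM1 hGtop
  have hform := hGmid M hρM.le le_rfl
  have hFM1 : F M < 1 := hFlt1 M hM0 hM1
  by_cases hcap : β*(M-ρ) ≤ 1
  · rw [min_eq_left hcap] at hform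
    have hnn : (0:ℝ) ≤ β*(M-ρ) := by nlinarith
    rw [hGM] at hform
    rw [hform]
    exact Real.rpow_inv_natCast_pow hnn hk
  · push_neg at hcap
    exfalso
    rw [min_eq_right hcap.le, Real.one_rpow] at hform
    rw [hGM] at hform
    linarith

lemma convexD {F : ℝ → ℝ} (hFconv : ConvexOn ℝ (Icc (0:ℝ) 1) F)
    (hFnn : ∀ v, 0 ≤ v → v ≤ 1 → 0 ≤ F v) (k : ℕ) (β ρ : ℝ) :
    ConvexOn ℝ (Icc (0:ℝ) 1) (fun v => F v ^ k - β*(v-ρ)) := by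
  have h1 := hFconv.pow (fun x hx => hFnn x hx.1 hx.2) k
  have h2 := convexOn_affine (-β) (β*ρ)
  have h3 := h1.add h2
  have he : (fun v => F v ^ k - β*(v-ρ)) = (F ^ k + fun v => (-β)*v + β*ρ) := by
    funext v
    simp only [Pi.add_apply, Pi.pow_apply]
    ring
  rw [he]
  exact h3

lemma no_bigger
    {F : ℝ → ℝ} (hFc : ContinuousOn F (Icc 0 1)) (hF1 : F 1 = 1)
    (hFpos : ∀ v, 0 < v → v ≤ 1 → 0 < F v)
    (hFlt1 : ∀ v, 0 ≤ v → v < 1 → F v < 1)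
    (hFnn : ∀ v, 0 ≤ v → v ≤ 1 → 0 ≤ F v)
    (hFconv : ConvexOn ℝ (Icc (0:ℝ) 1) F)
    {ρ : ℝ} (hρ0 : 0 < ρ)
    {k k' : ℕ} (hk : 1 ≤ k) (hkk' : k < k')
    {β M : ℝ} (hβ : 0 < β) (hρM : ρ < M) (hM1 : M ≤ 1)
    {β' M' : ℝ} (hβ' : 0 < β') (hρM' : ρ < M') (hM1' : M' ≤ 1)
    {Gn G' : ℝ → ℝ} (hGc : Continuous Gn) (hG'c : Continuous G')
    (hG0 : ∀ v, v ≤ ρ → Gn v = 0) (hG0' : ∀ v, v ≤ ρ → G' v = 0)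
    (hGmid : ∀ v, ρ ≤ v → v ≤ M → Gn v = (min (β*(v-ρ)) 1) ^ ((k:ℝ))⁻¹)
    (hGmid' : ∀ v, ρ ≤ v → v ≤ M' → G' v = (min (β'*(v-ρ)) 1) ^ ((k':ℝ))⁻¹)
    (hGtop : ∀ v, M < v → v ≤ 1 → Gn v = F v)
    (hGtop' : ∀ v, M' < v → v ≤ 1 → G' v = F v)
    (hG1 : Gn 1 = 1) (hG1' : G' 1 = 1)
    (hA0 : (∫ v in (0:ℝ)..1, (F v - Gn v)) = 0)
    (hB1 : ∀ z ∈ Icc (0:ℝ) 1, 0 ≤ ∫ v in (0:ℝ)..z, (F v - G' v))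
    (hB0 : (∫ v in (0:ℝ)..1, (F v - G' v)) = 0)
    (hMM' : M < M') : False := by
  have hkne : k ≠ 0 := by omega
  have hk'ne : k' ≠ 0 := by omega
  have hkR : (0:ℝ) < (k:ℝ) := by exact_mod_cast Nat.pos_of_ne_zero hkne
  have hk'R : (0:ℝ) < (k':ℝ) := by exact_mod_cast Nat.pos_of_ne_zero hk'ne
  have hkinv : (0:ℝ) < ((k:ℝ))⁻¹ := by positivity
  have hk'inv : (0:ℝ) < ((k':ℝ))⁻¹ := by positivity
  have hMlt1 : M < 1 := lt_of_lt_of_le hMM' hM1'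
  have hρ1 : ρ < 1 := lt_trans hρM hMlt1
  have hM0 : (0:ℝ) ≤ M := by linarith
  have hGM : Gn M = F M := GM_eq hFc hGc hM0 hMlt1 hGtop
  have hDMeq : F M ^ k = β * (M - ρ) :=
    structDMeq hFlt1 hFc hρ0 hkne hβ hρM hMlt1 hGc hGmid hGtop
  have hDM'le : F M' ^ k' ≤ β' * (M' - ρ) :=
    structDM hF1 hFlt1 hFc hρ0 hk'ne hβ' hρM' hM1' hG'c hGmid' hGtop' hG1'
  have hGM'eq : M' < 1 → G' M' = F M' := fun h =>
    GM_eq hFc hG'c (by linarith) h hGtop'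
  obtain ⟨xb, hxb, hxbFG⟩ :=
    exists_above hFc hFpos hρ0 hρM hM1 hGc hG0 (fun _ => hGM) hGtop hA0
  obtain ⟨wb, hwb, hwbFG⟩ :=
    exists_above hFc hFpos hρ0 hρM' hM1' hG'c hG0' hGM'eq hGtop' hB0
  have hxb1 : xb ≤ 1 := le_trans hxb.2.le hM1
  have hwb1 : wb ≤ 1 := le_trans hwb.2.le hM1'
  have hxbnn : (0:ℝ) ≤ xb := by linarith [hxb.1]
  have hwbnn : (0:ℝ) ≤ wb := by linarith [hwb.1]
  -- D xb < 0
  have hDxb : F xb ^ k < β * (xb - ρ) := by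
    have hGnxb := hGmid xb hxb.1.le hxb.2.le
    have hmnn : (0:ℝ) ≤ min (β*(xb-ρ)) 1 :=
      le_min (mul_nonneg hβ.le (by linarith [hxb.1])) zero_le_one
    have := (lt_rpowk_iff hkne hmnn (hFnn xb hxbnn hxb1)).mp (by rw [← hGnxb]; exact hxbFG)
    exact lt_of_lt_of_le this (min_le_left _ _)
  -- D' wb < 0
  have hD'wb : F wb ^ k' < β' * (wb - ρ) := by
    have hG'wb := hGmid' wb hwb.1.le hwb.2.le
    have hmnn : (0:ℝ) ≤ min (β'*(wb-ρ)) 1 :=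
      le_min (mul_nonneg hβ'.le (by linarith [hwb.1])) zero_le_one
    have := (lt_rpowk_iff hk'ne hmnn (hFnn wb hwbnn hwb1)).mp (by rw [← hG'wb]; exact hwbFG)
    exact lt_of_lt_of_le this (min_le_left _ _)
  have hconvD := convexD hFconv hFnn k β ρ
  have hconvD' := convexD hFconv hFnn k' β' ρ
  have hxbIcc : xb ∈ Icc (0:ℝ) 1 := ⟨hxbnn, hxb1⟩
  have hwbIcc : wb ∈ Icc (0:ℝ) 1 := ⟨hwbnn, hwb1⟩
  have hMIcc : M ∈ Icc (0:ℝ) 1 := ⟨hM0, hM1⟩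
  have hM'Icc : M' ∈ Icc (0:ℝ) 1 := ⟨by linarith, hM1'⟩
  have hDpos : ∀ w, M < w → w ≤ 1 → 0 < F w ^ k - β * (w - ρ) := by
    intro w h1 h2
    exact convex_pos_right hconvD hxbIcc ⟨by linarith, h2⟩ hMIcc hxb.2 h1
      (by show F xb ^ k - β*(xb-ρ) < 0; linarith)
      (by show 0 ≤ F M ^ k - β*(M-ρ); linarith [hDMeq])
  by_cases hbr : ∃ x ∈ Icc ρ M, G' x < Gn x
  · -- Branch 2
    obtain ⟨x, hx, hGG⟩ := hbr
    have hx1 : x ≤ 1 := le_trans hx.2 hM1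
    have hxnn : (0:ℝ) ≤ x := by linarith [hx.1]
    have hGnx := hGmid x hx.1 hx.2
    have hG'x := hGmid' x hx.1 (le_trans hx.2 hMM'.le)
    have hmnnq : (0:ℝ) ≤ min (β*(x-ρ)) 1 := le_min (mul_nonneg hβ.le (by linarith [hx.1])) zero_le_one
    have hmnnp : (0:ℝ) ≤ min (β'*(x-ρ)) 1 := le_min (mul_nonneg hβ'.le (by linarith [hx.1])) zero_le_one
    have hGnx_le1 : Gn x ≤ 1 := by
      rw [hGnx]; exact Real.rpow_le_one hmnnq (min_le_right _ _) hkinv.le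
    have hG'x_lt1 : G' x < 1 := lt_of_lt_of_le hGG hGnx_le1
    have hcap' : β'*(x-ρ) ≤ 1 := by
      by_contra hge
      push_neg at hge
      rw [hG'x, min_eq_right hge.le, Real.one_rpow] at hG'x_lt1
      exact lt_irrefl _ hG'x_lt1
    have hpx : G' x = (β'*(x-ρ)) ^ ((k':ℝ))⁻¹ := by rw [hG'x, min_eq_left hcap']
    have hGnq : Gn x ≤ (β*(x-ρ)) ^ ((k:ℝ))⁻¹ := by
      rw [hGnx]
      exact Real.rpow_le_rpow hmnnq (min_le_left _ _) hkinv.le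
    have hpq : (β'*(x-ρ)) ^ ((k':ℝ))⁻¹ < (β*(x-ρ)) ^ ((k:ℝ))⁻¹ := by
      rw [← hpx]; exact lt_of_lt_of_le hGG hGnq
    have htx : 0 < x - ρ := by
      rcases lt_or_eq_of_le hx.1 with h | h
      · linarith
      · exfalso
        have e1 : β'*(x-ρ) = 0 := by rw [← h]; ring
        have e2 : β*(x-ρ) = 0 := by rw [← h]; ring
        rw [e1, e2, Real.zero_rpow (ne_of_gt hkinv), Real.zero_rpow (ne_of_gt hk'inv)] at hpq
        exact lt_irrefl _ hpq
    have hcastle : (k:ℝ) ≤ (k':ℝ) := by exact_mod_cast hkk'.le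
    -- φ(M) ≤ 0
    have hφM : G' M ≤ Gn M := by
      rcases eq_or_lt_of_le hx.2 with he | hlt
      · rw [← he]; exact hGG.le
      · have hq := ratio_lemma hβ hβ' hkR hcastle htx (by linarith : x - ρ ≤ M - ρ) hpq
        have hG'M := hGmid' M (by linarith) hMM'.le
        have hGnM := hGmid M hρM.le le_rfl
        rw [hG'M, hGnM, min_rpow (mul_nonneg hβ'.le (by linarith)) hk'inv, min_rpow (mul_nonneg hβ.le (by linarith)) hkinv]
        exact min_le_min hq.le le_rfl
    have hD'M : β'*(M-ρ) ≤ F M ^ k' := by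
      have hG'M := hGmid' M (by linarith) hMM'.le
      have hFM1 : F M < 1 := hFlt1 M hM0 hMlt1
      by_cases hcap : β'*(M-ρ) ≤ 1
      · rw [min_eq_left hcap] at hG'M
        have : (β'*(M-ρ)) ^ ((k':ℝ))⁻¹ ≤ F M := by
          rw [← hG'M]
          rw [hGM] at hφM
          exact hφM
        exact (rpowk_le_iff hk'ne (mul_nonneg hβ'.le (by linarith)) (hFnn M hM0 hM1)).mp this
      · exfalso
        push_neg at hcap
        rw [min_eq_right hcap.le, Real.one_rpow] at hG'M
        rw [hGM, hG'M] at hφM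
        linarith
    -- wb > M
    have hwbM : M < wb := by
      rcases lt_trichotomy wb M with h | h | h
      · exfalso
        have := convex_neg_mid hconvD' hwbIcc hM'Icc h hMM'
          (by show F wb ^ k' - β'*(wb-ρ) < 0; linarith)
          (by show F M' ^ k' - β'*(M'-ρ) ≤ 0; linarith)
        have h2 : F M ^ k' - β'*(M-ρ) < 0 := this
        linarith
      · exfalso
        rw [h] at hD'wb
        linarith
      · exact h
    have hDwb := hDpos wb hwbM hwb1
    have hFq : (β*(wb-ρ)) ^ ((k:ℝ))⁻¹ < F wb :=
      (rpowk_lt_iff hkne (mul_nonneg hβ.le (by linarith [hwb.1])) (hFnn wb hwbnn hwb1)).mpr (by linarith)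
    have hpqwb := ratio_lemma hβ hβ' hkR hcastle htx
      (by linarith [hx.2] : x - ρ ≤ wb - ρ) hpq
    have hG'wb := hGmid' wb hwb.1.le hwb.2.le
    have hG'le : G' wb ≤ (β'*(wb-ρ)) ^ ((k':ℝ))⁻¹ := by
      rw [hG'wb]
      exact Real.rpow_le_rpow (le_min (mul_nonneg hβ'.le (by linarith [hwb.1])) zero_le_one)
        (min_le_left _ _) hk'inv.le
    linarith
  · -- Branch 1
    push_neg at hbr
    have h0mem : (0:ℝ) ∈ Icc (0:ℝ) 1 := ⟨le_rfl, zero_le_one⟩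
    have h1mem : (1:ℝ) ∈ Icc (0:ℝ) 1 := ⟨zero_le_one, le_rfl⟩
    have hρmem : ρ ∈ Icc (0:ℝ) 1 := ⟨hρ0.le, hρ1.le⟩
    have hFii : ∀ a b : ℝ, a ∈ Icc (0:ℝ) 1 → b ∈ Icc (0:ℝ) 1 →
        IntervalIntegrable F volume a b := fun a b ha hb =>
      (hFc.mono (uIcc_subset_Icc ha hb)).intervalIntegrable
    have hGii : ∀ a b : ℝ, IntervalIntegrable Gn volume a b := fun a b =>
      hGc.intervalIntegrable a b
    have hG'ii : ∀ a b : ℝ, IntervalIntegrable G' volume a b := fun a b =>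
      hG'c.intervalIntegrable a b
    have hBM := hB1 M hMIcc
    have hAM : (∫ v in (0:ℝ)..M, (F v - Gn v)) = 0 := by
      have eM : (∫ v in M..1, (F v - Gn v)) = 0 := by
        have : (∫ v in M..1, (F v - Gn v)) = ∫ v in M..1, (0:ℝ) := by
          apply intervalIntegral.integral_congr
          intro u hu
          rw [uIcc_of_le hM1] at hu
          show F u - Gn u = 0
          rcases eq_or_lt_of_le hu.1 with hue | hul
          · rw [← hue, hGM, sub_self]
          · rw [hGtop u hul hu.2, sub_self]
        rw [this, intervalIntegral.integral_zero]
      have a2 : (∫ v in (0:ℝ)..M, (F v - Gn v)) + (∫ v in M..1, (F v - Gn v))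
          = ∫ v in (0:ℝ)..1, (F v - Gn v) :=
        intervalIntegral.integral_add_adjacent_intervals
          ((hFii 0 M h0mem hMIcc).sub (hGii 0 M)) ((hFii M 1 hMIcc h1mem).sub (hGii M 1))
      rw [hA0, eM] at a2
      linarith
    have hsub : (∫ v in (0:ℝ)..M, (G' v - Gn v))
        = (∫ v in (0:ℝ)..M, (F v - Gn v)) - (∫ v in (0:ℝ)..M, (F v - G' v)) := by
      rw [← intervalIntegral.integral_sub ((hFii 0 M h0mem hMIcc).sub (hGii 0 M))
        ((hFii 0 M h0mem hMIcc).sub (hG'ii 0 M))]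
      apply intervalIntegral.integral_congr
      intro u _
      show G' u - Gn u = (F u - Gn u) - (F u - G' u)
      ring
    have hΛM_le : (∫ v in (0:ℝ)..M, (G' v - Gn v)) ≤ 0 := by
      rw [hsub, hAM]; linarith
    have h0ρ : (∫ v in (0:ℝ)..ρ, (G' v - Gn v)) = 0 := by
      have : (∫ v in (0:ℝ)..ρ, (G' v - Gn v)) = ∫ v in (0:ℝ)..ρ, (0:ℝ) := by
        apply intervalIntegral.integral_congr
        intro u hu
        rw [uIcc_of_le hρ0.le] at hu
        show G' u - Gn u = 0
        rw [hG0 u hu.2, hG0' u hu.2]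
        ring
      rw [this, intervalIntegral.integral_zero]
    have hsplit : (∫ v in (0:ℝ)..ρ, (G' v - Gn v)) + (∫ v in ρ..M, (G' v - Gn v))
        = ∫ v in (0:ℝ)..M, (G' v - Gn v) :=
      intervalIntegral.integral_add_adjacent_intervals
        ((hG'ii 0 ρ).sub (hGii 0 ρ)) ((hG'ii ρ M).sub (hGii ρ M))
    have hnnρM : 0 ≤ ∫ v in ρ..M, (G' v - Gn v) :=
      intervalIntegral.integral_nonneg hρM.le
        (fun u hu => sub_nonneg.2 (hbr u hu))
    have hzeroInt : (∫ v in ρ..M, (G' v - Gn v)) = 0 := by linarith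
    have hzero := zero_of_nonneg_integral_zero (hG'c.sub hGc) hρM
      (fun u hu => sub_nonneg.2 (hbr u hu)) hzeroInt
    -- two points
    set t0 := min ((M - ρ)/2) (min ((2*β)⁻¹) ((2*β')⁻¹)) with ht0_def
    have ht0 : 0 < t0 := by
      refine lt_min (by linarith) (lt_min (by positivity) (by positivity))
    have ht0M : t0 ≤ (M - ρ)/2 := min_le_left _ _
    have ht0β : t0 ≤ (2*β)⁻¹ := le_trans (min_le_right _ _) (min_le_left _ _)
    have ht0β' : t0 ≤ (2*β')⁻¹ := le_trans (min_le_right _ _) (min_le_right _ _)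
    have hβt0 : β * t0 < 1 := by
      have : β * t0 ≤ β * (2*β)⁻¹ := mul_le_mul_of_nonneg_left ht0β hβ.le
      have h2 : β * (2*β)⁻¹ = 1/2 := by field_simp
      linarith
    have hβ't0 : β' * t0 < 1 := by
      have : β' * t0 ≤ β' * (2*β')⁻¹ := mul_le_mul_of_nonneg_left ht0β' hβ'.le
      have h2 : β' * (2*β')⁻¹ = 1/2 := by field_simp
      linarith
    have hval : ∀ t : ℝ, 0 < t → t ≤ t0 → (β*t) ^ ((k:ℝ))⁻¹ = (β'*t) ^ ((k':ℝ))⁻¹ := by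
      intro t ht htle
      have hmem : ρ + t ∈ Ioo ρ M := ⟨by linarith, by linarith⟩
      have hz := hzero (ρ + t) hmem
      have hGn := hGmid (ρ + t) (by linarith) (by linarith)
      have hG' := hGmid' (ρ + t) (by linarith) (by linarith [hMM'])
      have he : ρ + t - ρ = t := by ring
      rw [he] at hGn hG'
      have hc1 : β * t ≤ 1 := le_of_lt (lt_of_le_of_lt (mul_le_mul_of_nonneg_left htle hβ.le) hβt0)
      have hc2 : β' * t ≤ 1 := le_of_lt (lt_of_le_of_lt (mul_le_mul_of_nonneg_left htle hβ'.le) hβ't0)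
      rw [min_eq_left hc1] at hGn
      rw [min_eq_left hc2] at hG'
      have : G' (ρ + t) = Gn (ρ + t) := by linarith [hz, show (G' - Gn) (ρ + t) = G' (ρ + t) - Gn (ρ + t) from rfl]
      rw [hGn, hG'] at this
      exact this.symm
    have hkeq : (k:ℝ) = (k':ℝ) :=
      exponent_eq hβ hβ' hkR hk'R ht0 (hval t0 ht0 le_rfl)
        (hval (t0/2) (by linarith) (by linarith))
    have : k = k' := by exact_mod_cast hkeq
    omega

lemma onceNeg
    {F : ℝ → ℝ} (hFc : ContinuousOn F (Icc 0 1)) (hF1 : F 1 = 1)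
    (hFlt1 : ∀ v, 0 ≤ v → v < 1 → F v < 1)
    (hFnn : ∀ v, 0 ≤ v → v ≤ 1 → 0 ≤ F v)
    (hFle1 : ∀ v, 0 ≤ v → v ≤ 1 → F v ≤ 1)
    (hFconv : ConvexOn ℝ (Icc (0:ℝ) 1) F)
    {ρ : ℝ} (hρ0 : 0 < ρ)
    {k k' : ℕ} (hk : 1 ≤ k) (hkk' : k < k')
    {β M : ℝ} (hβ : 0 < β) (hρM : ρ < M) (hM1 : M ≤ 1)
    {β' M' : ℝ} (hβ' : 0 < β') (hρM' : ρ < M') (hM1' : M' ≤ 1)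
    {Gn G' : ℝ → ℝ} (hGc : Continuous Gn) (hG'c : Continuous G')
    (hGmid : ∀ v, ρ ≤ v → v ≤ M → Gn v = (min (β*(v-ρ)) 1) ^ ((k:ℝ))⁻¹)
    (hGmid' : ∀ v, ρ ≤ v → v ≤ M' → G' v = (min (β'*(v-ρ)) 1) ^ ((k':ℝ))⁻¹)
    (hGtop : ∀ v, M < v → v ≤ 1 → Gn v = F v)
    (hGtop' : ∀ v, M' < v → v ≤ 1 → G' v = F v)
    (hG1 : Gn 1 = 1)
    (hM'M : M' ≤ M)
    {x v : ℝ} (hx : ρ ≤ x) (hxv : x < v) (hv1 : v ≤ 1)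
    (hneg : G' x < Gn x) : G' v ≤ Gn v := by
  have hkne : k ≠ 0 := by omega
  have hk'ne : k' ≠ 0 := by omega
  have hkR : (0:ℝ) < (k:ℝ) := by exact_mod_cast Nat.pos_of_ne_zero hkne
  have hk'R : (0:ℝ) < (k':ℝ) := by exact_mod_cast Nat.pos_of_ne_zero hk'ne
  have hkinv : (0:ℝ) < ((k:ℝ))⁻¹ := by positivity
  have hk'inv : (0:ℝ) < ((k':ℝ))⁻¹ := by positivity
  have hcastle : (k:ℝ) ≤ (k':ℝ) := by exact_mod_cast hkk'.le
  have hx1 : x < 1 := lt_of_lt_of_le hxv hv1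
  have hxnn : (0:ℝ) ≤ x := by linarith
  have hρ1 : ρ < 1 := lt_of_le_of_lt hx hx1
  have hDMle : F M ^ k ≤ β * (M - ρ) :=
    structDM hF1 hFlt1 hFc hρ0 hkne hβ hρM hM1 hGc hGmid hGtop hG1
  have hconvD := convexD hFconv hFnn k β ρ
  have hMIcc : M ∈ Icc (0:ℝ) 1 := ⟨by linarith, hM1⟩
  have hM'Icc : M' ∈ Icc (0:ℝ) 1 := ⟨by linarith, hM1'⟩
  -- x ≤ M
  have hxM : x ≤ M := by
    by_contra hgt
    push_neg at hgt
    rw [hGtop x hgt hx1.le, hGtop' x (lt_of_le_of_lt hM'M hgt) hx1.le] at hneg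
    exact lt_irrefl _ hneg
  -- if v is above M, both equal F v
  by_cases hvM : v ≤ M
  · -- v ≤ M
    -- helper: from D v ≤ 0 conclude F v ≤ Gn v
    have hDle_to : ∀ w, ρ ≤ w → w ≤ M → w ≤ 1 → F w ^ k ≤ β*(w-ρ) → F w ≤ Gn w := by
      intro w h1 h2 h3 h4
      have hwnn : (0:ℝ) ≤ w := by linarith
      have hmin : F w ^ k ≤ min (β*(w-ρ)) 1 :=
        le_min h4 (by
          have := hFle1 w hwnn h3
          calc F w ^ k ≤ 1 ^ k := pow_le_pow_left₀ (hFnn w hwnn h3) this k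
          _ = 1 := one_pow k)
      have := (le_rpowk_iff hkne (le_min (mul_nonneg hβ.le (by linarith)) zero_le_one)
        (hFnn w hwnn h3)).mpr hmin
      rw [← hGmid w h1 h2] at this
      exact this
    by_cases hxM' : x ≤ M'
    · -- x in power-power region
      have hGnx := hGmid x hx hxM
      have hG'x := hGmid' x hx hxM'
      have hmnnq : (0:ℝ) ≤ min (β*(x-ρ)) 1 :=
        le_min (mul_nonneg hβ.le (by linarith)) zero_le_one
      have hGnx_le1 : Gn x ≤ 1 := by
        rw [hGnx]; exact Real.rpow_le_one hmnnq (min_le_right _ _) hkinv.le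
      have hG'x_lt1 : G' x < 1 := lt_of_lt_of_le hneg hGnx_le1
      have hcap' : β'*(x-ρ) ≤ 1 := by
        by_contra hge
        push_neg at hge
        rw [hG'x, min_eq_right hge.le, Real.one_rpow] at hG'x_lt1
        exact lt_irrefl _ hG'x_lt1
      have hpx : G' x = (β'*(x-ρ)) ^ ((k':ℝ))⁻¹ := by rw [hG'x, min_eq_left hcap']
      have hGnq : Gn x ≤ (β*(x-ρ)) ^ ((k:ℝ))⁻¹ := by
        rw [hGnx]
        exact Real.rpow_le_rpow hmnnq (min_le_left _ _) hkinv.le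
      have hpq : (β'*(x-ρ)) ^ ((k':ℝ))⁻¹ < (β*(x-ρ)) ^ ((k:ℝ))⁻¹ := by
        rw [← hpx]; exact lt_of_lt_of_le hneg hGnq
      have htx : 0 < x - ρ := by
        rcases lt_or_eq_of_le hx with h | h
        · linarith
        · exfalso
          have e1 : β'*(x-ρ) = 0 := by rw [← h]; ring
          have e2 : β*(x-ρ) = 0 := by rw [← h]; ring
          rw [e1, e2, Real.zero_rpow (ne_of_gt hkinv),
            Real.zero_rpow (ne_of_gt hk'inv)] at hpq
          exact lt_irrefl _ hpq
      by_cases hvM' : v ≤ M'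
      · -- both power at v
        have hq := ratio_lemma hβ hβ' hkR hcastle htx (by linarith : x - ρ ≤ v - ρ) hpq
        have hG'v := hGmid' v (by linarith) hvM'
        have hGnv := hGmid v (by linarith) hvM
        rw [hG'v, hGnv, min_rpow (mul_nonneg hβ'.le (by linarith)) hk'inv,
          min_rpow (mul_nonneg hβ.le (by linarith)) hkinv]
        exact min_le_min hq.le le_rfl
      · -- M' < v ≤ M
        push_neg at hvM'
        have hM'lt1 : M' < 1 := lt_of_lt_of_le hvM' hv1
        -- φ(M') ≤ 0
        have hφM' : G' M' ≤ Gn M' := by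
          rcases eq_or_lt_of_le hxM' with he | hlt
          · rw [← he]; exact hneg.le
          · have hq := ratio_lemma hβ hβ' hkR hcastle htx (by linarith : x - ρ ≤ M' - ρ) hpq
            have hG'M' := hGmid' M' hρM'.le le_rfl
            have hGnM' := hGmid M' hρM'.le hM'M
            rw [hG'M', hGnM', min_rpow (mul_nonneg hβ'.le (by linarith)) hk'inv,
              min_rpow (mul_nonneg hβ.le (by linarith)) hkinv]
            exact min_le_min hq.le le_rfl
        have hGM' : G' M' = F M' := GM_eq hFc hG'c (by linarith) hM'lt1 hGtop'
        have hDM' : F M' ^ k ≤ β*(M'-ρ) := by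
          rw [hGM'] at hφM'
          have hGnM' := hGmid M' hρM'.le hM'M
          have hmnn : (0:ℝ) ≤ min (β*(M'-ρ)) 1 :=
            le_min (mul_nonneg hβ.le (by linarith)) zero_le_one
          have h5 : F M' ^ k ≤ min (β*(M'-ρ)) 1 := by
            have := (le_rpowk_iff hkne hmnn (hFnn M' (by linarith) hM1')).mp
              (by rw [← hGnM']; exact hφM')
            exact this
          exact le_trans h5 (min_le_left _ _)
        -- D v ≤ 0 via convexity on [M', M]
        have hseg : v ∈ segment ℝ M' M := by
          rw [segment_eq_Icc hM'M]
          exact ⟨hvM'.le, hvM⟩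
        have hDv := hconvD.le_on_segment hM'Icc hMIcc hseg
        have hDv' : F v ^ k - β*(v-ρ) ≤ 0 := by
          have h6 : F M' ^ k - β*(M'-ρ) ≤ 0 := by linarith
          have h7 : F M ^ k - β*(M-ρ) ≤ 0 := by linarith
          calc F v ^ k - β*(v-ρ) ≤ max (F M' ^ k - β*(M'-ρ)) (F M ^ k - β*(M-ρ)) := hDv
          _ ≤ 0 := max_le h6 h7
        have hFv : F v ≤ Gn v := hDle_to v (by linarith) hvM hv1 (by linarith)
        rw [hGtop' v hvM' hv1]
        exact hFv
    · -- M' < x ≤ M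
      push_neg at hxM'
      have hM'lt1 : M' < 1 := lt_of_lt_of_le hxM' hx1.le
      have hG'xF : G' x = F x := hGtop' x hxM' hx1.le
      rw [hG'xF] at hneg
      have hGnx := hGmid x hx hxM
      have hDx : F x ^ k < β*(x-ρ) := by
        have hmnn : (0:ℝ) ≤ min (β*(x-ρ)) 1 :=
          le_min (mul_nonneg hβ.le (by linarith)) zero_le_one
        have := (lt_rpowk_iff hkne hmnn (hFnn x hxnn hx1.le)).mp
          (by rw [← hGnx]; exact hneg)
        exact lt_of_lt_of_le this (min_le_left _ _)
      have hxIcc : x ∈ Icc (0:ℝ) 1 := ⟨hxnn, hx1.le⟩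
      have hseg : v ∈ segment ℝ x M := by
        rw [segment_eq_Icc hxM]
        exact ⟨hxv.le, hvM⟩
      have hDv := hconvD.le_on_segment hxIcc hMIcc hseg
      have hDv' : F v ^ k - β*(v-ρ) ≤ 0 := by
        have h6 : F x ^ k - β*(x-ρ) ≤ 0 := by linarith
        have h7 : F M ^ k - β*(M-ρ) ≤ 0 := by linarith
        calc F v ^ k - β*(v-ρ) ≤ max (F x ^ k - β*(x-ρ)) (F M ^ k - β*(M-ρ)) := hDv
        _ ≤ 0 := max_le h6 h7
      have hFv : F v ≤ Gn v := hDle_to v (by linarith) hvM hv1 (by linarith)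
      rw [hGtop' v (lt_trans hxM' hxv) hv1]
      exact hFv
  · -- v > M : both equal F v
    push_neg at hvM
    rw [hGtop v hvM hv1, hGtop' v (lt_of_le_of_lt hM'M hvM) hv1]

lemma keyLemma
    {F : ℝ → ℝ} (hFc : ContinuousOn F (Icc 0 1)) (hF1 : F 1 = 1)
    (hFpos : ∀ v, 0 < v → v ≤ 1 → 0 < F v)
    (hFlt1 : ∀ v, 0 ≤ v → v < 1 → F v < 1)
    (hFnn : ∀ v, 0 ≤ v → v ≤ 1 → 0 ≤ F v)
    (hFle1 : ∀ v, 0 ≤ v → v ≤ 1 → F v ≤ 1)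
    (hFconv : ConvexOn ℝ (Icc (0:ℝ) 1) F)
    {ρ : ℝ} (hρ0 : 0 < ρ)
    {k k' : ℕ} (hk : 1 ≤ k) (hkk' : k < k')
    {β M : ℝ} (hβ : 0 < β) (hρM : ρ < M) (hM1 : M ≤ 1)
    {β' M' : ℝ} (hβ' : 0 < β') (hρM' : ρ < M') (hM1' : M' ≤ 1)
    {Gn G' : ℝ → ℝ} (hGc : Continuous Gn) (hG'c : Continuous G')
    (hG0 : ∀ v, v ≤ ρ → Gn v = 0) (hG0' : ∀ v, v ≤ ρ → G' v = 0)
    (hGmid : ∀ v, ρ ≤ v → v ≤ M → Gn v = (min (β*(v-ρ)) 1) ^ ((k:ℝ))⁻¹)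
    (hGmid' : ∀ v, ρ ≤ v → v ≤ M' → G' v = (min (β'*(v-ρ)) 1) ^ ((k':ℝ))⁻¹)
    (hGtop : ∀ v, M < v → v ≤ 1 → Gn v = F v)
    (hGtop' : ∀ v, M' < v → v ≤ 1 → G' v = F v)
    (hG1 : Gn 1 = 1) (hG1' : G' 1 = 1)
    (hA1 : ∀ z ∈ Icc (0:ℝ) 1, 0 ≤ ∫ v in (0:ℝ)..z, (F v - Gn v))
    (hA0 : (∫ v in (0:ℝ)..1, (F v - Gn v)) = 0)
    (hB1 : ∀ z ∈ Icc (0:ℝ) 1, 0 ≤ ∫ v in (0:ℝ)..z, (F v - G' v))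
    (hB0 : (∫ v in (0:ℝ)..1, (F v - G' v)) = 0) :
    (∀ z ∈ Icc (0:ℝ) 1, 0 ≤ ∫ v in (0:ℝ)..z, (G' v - Gn v)) ∧
      ∃ v ∈ Icc (0:ℝ) 1, Gn v ≠ G' v := by
  have hρ1 : ρ < 1 := lt_of_lt_of_le hρM hM1
  have hkne : k ≠ 0 := by omega
  have hk'ne : k' ≠ 0 := by omega
  have hkR : (0:ℝ) < (k:ℝ) := by exact_mod_cast Nat.pos_of_ne_zero hkne
  have hk'R : (0:ℝ) < (k':ℝ) := by exact_mod_cast Nat.pos_of_ne_zero hk'ne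
  have hM'M : M' ≤ M := by
    by_contra hcon
    push_neg at hcon
    exact no_bigger hFc hF1 hFpos hFlt1 hFnn hFconv hρ0 hk hkk' hβ hρM hM1
      hβ' hρM' hM1' hGc hG'c hG0 hG0' hGmid hGmid' hGtop hGtop' hG1 hG1'
      hA0 hB1 hB0 hcon
  have h0mem : (0:ℝ) ∈ Icc (0:ℝ) 1 := ⟨le_rfl, zero_le_one⟩
  have h1mem : (1:ℝ) ∈ Icc (0:ℝ) 1 := ⟨zero_le_one, le_rfl⟩
  have hρmem : ρ ∈ Icc (0:ℝ) 1 := ⟨hρ0.le, hρ1.le⟩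
  have hFii : ∀ a b : ℝ, a ∈ Icc (0:ℝ) 1 → b ∈ Icc (0:ℝ) 1 →
      IntervalIntegrable F volume a b := fun a b ha hb =>
    (hFc.mono (uIcc_subset_Icc ha hb)).intervalIntegrable
  have hGii : ∀ a b : ℝ, IntervalIntegrable Gn volume a b := fun a b =>
    hGc.intervalIntegrable a b
  have hG'ii : ∀ a b : ℝ, IntervalIntegrable G' volume a b := fun a b =>
    hG'c.intervalIntegrable a b
  have hφii : ∀ a b : ℝ, IntervalIntegrable (fun v => G' v - Gn v) volume a b :=
    fun a b => (hG'ii a b).sub (hGii a b)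
  -- Λ(1) = 0
  have hΛ1 : (∫ v in (0:ℝ)..1, (G' v - Gn v)) = 0 := by
    have hsub : (∫ v in (0:ℝ)..1, (G' v - Gn v))
        = (∫ v in (0:ℝ)..1, (F v - Gn v)) - (∫ v in (0:ℝ)..1, (F v - G' v)) := by
      rw [← intervalIntegral.integral_sub ((hFii 0 1 h0mem h1mem).sub (hGii 0 1))
        ((hFii 0 1 h0mem h1mem).sub (hG'ii 0 1))]
      apply intervalIntegral.integral_congr
      intro u _
      show G' u - Gn u = (F u - Gn u) - (F u - G' u)
      ring
    rw [hsub, hA0, hB0, sub_zero]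
  have hzeroIcc : ∀ a b : ℝ, b ≤ ρ → a ≤ b → (∫ v in a..b, (G' v - Gn v)) = 0 := by
    intro a b hbρ hab
    have : (∫ v in a..b, (G' v - Gn v)) = ∫ v in a..b, (0:ℝ) := by
      apply intervalIntegral.integral_congr
      intro u hu
      rw [uIcc_of_le hab] at hu
      show G' u - Gn u = 0
      rw [hG0 u (le_trans hu.2 hbρ), hG0' u (le_trans hu.2 hbρ)]
      ring
    rw [this, intervalIntegral.integral_zero]
  constructor
  · intro z hz
    by_cases hzρ : z ≤ ρ
    · rw [hzeroIcc 0 z hzρ hz.1]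
    · push_neg at hzρ
      by_cases hposc : ∀ x ∈ Icc ρ z, Gn x ≤ G' x
      · have hsplit : (∫ v in (0:ℝ)..ρ, (G' v - Gn v)) + (∫ v in ρ..z, (G' v - Gn v))
            = ∫ v in (0:ℝ)..z, (G' v - Gn v) :=
          intervalIntegral.integral_add_adjacent_intervals (hφii 0 ρ) (hφii ρ z)
        have h1 : (∫ v in (0:ℝ)..ρ, (G' v - Gn v)) = 0 := hzeroIcc 0 ρ le_rfl hρ0.le
        have h2 : 0 ≤ ∫ v in ρ..z, (G' v - Gn v) :=
          intervalIntegral.integral_nonneg hzρ.le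
            (fun u hu => sub_nonneg.2 (hposc u hu))
        linarith
      · push_neg at hposc
        obtain ⟨x, hxmem, hxlt⟩ := hposc
        have hφle : ∀ w ∈ Icc z 1, G' w ≤ Gn w := by
          intro w hw
          rcases eq_or_lt_of_le (le_trans hxmem.2 hw.1) with he | hlt
          · rw [← he]; exact hxlt.le
          · exact onceNeg hFc hF1 hFlt1 hFnn hFle1 hFconv hρ0 hk hkk' hβ hρM hM1
              hβ' hρM' hM1' hGc hG'c hGmid hGmid' hGtop hGtop' hG1 hM'M
              hxmem.1 hlt hw.2 hxlt
        have hsplit : (∫ v in (0:ℝ)..z, (G' v - Gn v)) + (∫ v in z..1, (G' v - Gn v))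
            = ∫ v in (0:ℝ)..1, (G' v - Gn v) :=
          intervalIntegral.integral_add_adjacent_intervals (hφii 0 z) (hφii z 1)
        have h2 : 0 ≤ ∫ v in z..1, (Gn v - G' v) :=
          intervalIntegral.integral_nonneg hz.2
            (fun u hu => sub_nonneg.2 (hφle u hu))
        have h3 : (∫ v in z..1, (Gn v - G' v)) = -(∫ v in z..1, (G' v - Gn v)) := by
          rw [← intervalIntegral.integral_neg]
          apply intervalIntegral.integral_congr
          intro u _
          show Gn u - G' u = -(G' u - Gn u)
          ring
        rw [h3] at h2
        linarith
  · by_contra hcon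
    push_neg at hcon
    set t0 := min ((M' - ρ)/2) (min ((2*β)⁻¹) ((2*β')⁻¹)) with ht0_def
    have ht0 : 0 < t0 :=
      lt_min (by linarith) (lt_min (by positivity) (by positivity))
    have ht0M : t0 ≤ (M' - ρ)/2 := min_le_left _ _
    have ht0β : t0 ≤ (2*β)⁻¹ := le_trans (min_le_right _ _) (min_le_left _ _)
    have ht0β' : t0 ≤ (2*β')⁻¹ := le_trans (min_le_right _ _) (min_le_right _ _)
    have hβt0 : β * t0 < 1 := by
      have h1 : β * t0 ≤ β * (2*β)⁻¹ := mul_le_mul_of_nonneg_left ht0β hβ.le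
      have h2 : β * (2*β)⁻¹ = 1/2 := by field_simp
      linarith
    have hβ't0 : β' * t0 < 1 := by
      have h1 : β' * t0 ≤ β' * (2*β')⁻¹ := mul_le_mul_of_nonneg_left ht0β' hβ'.le
      have h2 : β' * (2*β')⁻¹ = 1/2 := by field_simp
      linarith
    have hval : ∀ t : ℝ, 0 < t → t ≤ t0 → (β*t) ^ ((k:ℝ))⁻¹ = (β'*t) ^ ((k':ℝ))⁻¹ := by
      intro t ht htle
      have hmemM' : ρ + t ≤ M' := by linarith
      have hmemIcc : ρ + t ∈ Icc (0:ℝ) 1 := ⟨by linarith, by linarith⟩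
      have hz := hcon (ρ + t) hmemIcc
      have hGn := hGmid (ρ + t) (by linarith) (by linarith)
      have hG' := hGmid' (ρ + t) (by linarith) hmemM'
      have he : ρ + t - ρ = t := by ring
      rw [he] at hGn hG'
      have hc1 : β * t ≤ 1 :=
        le_of_lt (lt_of_le_of_lt (mul_le_mul_of_nonneg_left htle hβ.le) hβt0)
      have hc2 : β' * t ≤ 1 :=
        le_of_lt (lt_of_le_of_lt (mul_le_mul_of_nonneg_left htle hβ'.le) hβ't0)
      rw [min_eq_left hc1] at hGn
      rw [min_eq_left hc2] at hG'
      rw [← hGn, ← hG']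
      exact hz
    have hkeq : (k:ℝ) = (k':ℝ) :=
      exponent_eq hβ hβ' hkR hk'R ht0 (hval t0 ht0 le_rfl)
        (hval (t0/2) (by linarith) (by linarith))
    have : k = k' := by exact_mod_cast hkeq
    omega

lemma normalizeG (F : ℝ → ℝ) (hF0 : F 0 = 0)
    {n : ℕ} (hn : 2 ≤ n) {vLn vHn βn rn : ℝ} {Gn : ℝ → ℝ}
    (hd : DisclosureForm F n vLn vHn βn rn Gn)
    (hvL : vLn = 0) (hneg : ∀ v < (0:ℝ), Gn v = 0) :
    (∀ v, v ≤ rn → Gn v = 0) ∧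
    (∀ v, rn ≤ v → v ≤ vHn →
      Gn v = (min (βn*(v-rn)) 1) ^ ((((n-1 : ℕ)):ℝ))⁻¹) := by
  obtain ⟨h0, h1, h2, h3, h4, h5, h6, h7, h8⟩ := hd
  subst hvL
  have hcast : ((n:ℝ) - 1)⁻¹ = ((((n-1 : ℕ)):ℝ))⁻¹ := by
    rw [Nat.cast_sub (by omega : 1 ≤ n)]
    norm_num
  have hzpow : F 0 ^ (n - 1) = 0 := by
    rw [hF0]
    exact zero_pow (by omega)
  have hmid : ∀ v, rn ≤ v → v ≤ vHn →
      Gn v = (min (βn*(v-rn)) 1) ^ ((((n-1 : ℕ)):ℝ))⁻¹ := by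
    intro v ha hb
    rw [h7 v ha hb, hzpow, zero_add, hcast]
  refine ⟨?_, hmid⟩
  intro v hv
  rcases lt_trichotomy v 0 with h | h | h
  · exact hneg v h
  · rw [h5 v (le_of_eq h), h, hF0]
  · rcases eq_or_lt_of_le hv with he | hlt
    · rw [he]
      have := hmid rn le_rfl h2.le
      rw [this]
      have : βn*(rn-rn) = 0 := by ring
      rw [this, min_eq_left zero_le_one]
      · exact Real.zero_rpow (by
          have : (0:ℝ) < (((n-1:ℕ)):ℝ) := by
            exact_mod_cast Nat.pos_of_ne_zero (by omega)
          positivity)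
    · rw [h6 v h hlt, hF0]

/-- Competition and Informativeness. With search cost `s ∈ (0, μ)`,
equilibrium family `(G_n, r_n)` and threshold `n̲ ≥ 2` (no disclosure at the bottom iff
`n ≥ n̲`), for all `n̲ ≤ n < n'` the equilibrium `G_n` is an MPC of `G_{n'}` and
`G_n ≠ G_{n'}`: informativeness strictly increases with the number of firms. -/
theorem stmt12 (F f : ℝ → ℝ) (μ : ℝ)
    (hf_cont : ContinuousOn f (Set.Icc 0 1))
    (hf_pos : ∀ v ∈ Set.Icc (0 : ℝ) 1, 0 < f v)
    (hF : ∀ z ∈ Set.Icc (0 : ℝ) 1, F z = ∫ t in (0 : ℝ)..z, f t)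
    (hF1 : F 1 = 1)
    (hμ : μ = ∫ v in (0 : ℝ)..1, v * f v)
    (hFconv : ConvexOn ℝ (Set.Icc (0 : ℝ) 1) F)
    (α s : ℝ) (hα : α ∈ Set.Ioo (0 : ℝ) 1) (hs : s ∈ Set.Ioo (0 : ℝ) μ)
    (G : ℕ → StieltjesFunction ℝ) (rr vL vH β : ℕ → ℝ)
    (heq : ∀ n, 2 ≤ n → IsSymEq F α n (rr n) (G n))
    (hsearch : ∀ n, 2 ≤ n →
      (∫ v in Set.Ioc (rr n) 1, (v - rr n) ∂(G n).measure) = s)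
    (hform : ∀ n, 2 ≤ n →
      DisclosureForm F n (vL n) (vH n) (β n) (rr n) (G n : ℝ → ℝ))
    (huniq : ∀ n, 2 ≤ n → ∀ (G' : StieltjesFunction ℝ) (r' : ℝ),
      IsSymEq F α n r' G' →
      (∫ v in Set.Ioc r' 1, (v - r') ∂G'.measure) = s →
      r' = rr n ∧ ∀ v ∈ Set.Icc (0 : ℝ) 1, G' v = G n v)
    (nbar : ℕ) (hnbar : 2 ≤ nbar)
    (hthresh : ∀ n, 2 ≤ n → (vL n = 0 ↔ nbar ≤ n)) :
    ∀ n n' : ℕ, nbar ≤ n → n < n' →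
      MPCof (G n : ℝ → ℝ) (G n' : ℝ → ℝ) ∧
      ∃ v ∈ Set.Icc (0 : ℝ) 1, G n v ≠ G n' v := by
  intro n n' hn hnn'
  have hn2 : 2 ≤ n := le_trans hnbar hn
  have hn'2 : 2 ≤ n' := le_trans hn2 (le_of_lt hnn')
  have hn' : nbar ≤ n' := le_trans hn (le_of_lt hnn')
  -- F basics
  have h0mem : (0:ℝ) ∈ Icc (0:ℝ) 1 := ⟨le_rfl, zero_le_one⟩
  have h1mem : (1:ℝ) ∈ Icc (0:ℝ) 1 := ⟨zero_le_one, le_rfl⟩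
  have hfii : ∀ a b : ℝ, a ∈ Icc (0:ℝ) 1 → b ∈ Icc (0:ℝ) 1 →
      IntervalIntegrable f volume a b :=
    fun a b ha hb => (hf_cont.mono (uIcc_subset_Icc ha hb)).intervalIntegrable
  have hF0 : F 0 = 0 := by rw [hF 0 h0mem, intervalIntegral.integral_same]
  have hFdiff : ∀ a b : ℝ, a ∈ Icc (0:ℝ) 1 → b ∈ Icc (0:ℝ) 1 → a ≤ b →
      F b - F a = ∫ t in a..b, f t := by
    intro a b ha hb hab
    rw [hF a ha, hF b hb]
    have := intervalIntegral.integral_add_adjacent_intervals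
      (hfii 0 a h0mem ha) (hfii a b ha hb)
    linarith
  have hFposIoo : ∀ a b : ℝ, a ∈ Icc (0:ℝ) 1 → b ∈ Icc (0:ℝ) 1 → a < b → F a < F b := by
    intro a b ha hb hab
    have hpos : 0 < ∫ t in a..b, f t :=
      intervalIntegral.intervalIntegral_pos_of_pos_on (hfii a b ha hb)
        (fun x hx => hf_pos x ⟨le_trans ha.1 hx.1.le, le_trans hx.2.le hb.2⟩) hab
    have := hFdiff a b ha hb hab.le
    linarith
  have hFpos : ∀ v, 0 < v → v ≤ 1 → 0 < F v := by
    intro v h1 h2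
    have := hFposIoo 0 v h0mem ⟨h1.le, h2⟩ h1
    linarith [hF0]
  have hFlt1 : ∀ v, 0 ≤ v → v < 1 → F v < 1 := by
    intro v h1 h2
    have := hFposIoo v 1 ⟨h1, h2.le⟩ h1mem h2
    linarith [hF1]
  have hFnn : ∀ v, 0 ≤ v → v ≤ 1 → 0 ≤ F v := by
    intro v h1 h2
    rcases eq_or_lt_of_le h1 with he | hl
    · rw [← he, hF0]
    · exact (hFpos v hl h2).le
  have hFle1 : ∀ v, 0 ≤ v → v ≤ 1 → F v ≤ 1 := by
    intro v h1 h2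
    rcases eq_or_lt_of_le h2 with he | hl
    · rw [he, hF1]
    · exact (hFlt1 v h1 hl).le
  have hfIcc : IntegrableOn f (Icc (0:ℝ) 1) volume :=
    hf_cont.integrableOn_compact isCompact_Icc
  have hFc : ContinuousOn F (Icc (0:ℝ) 1) := by
    have hprim := intervalIntegral.continuousOn_primitive (a := (0:ℝ)) (b := 1)
      (μ := volume) hfIcc
    exact hprim.congr (fun z hz => by
      rw [hF z hz, intervalIntegral.integral_of_le hz.1])
  -- equilibrium data
  obtain ⟨hGcN, hCDFN, hMPCN, -⟩ := heq n hn2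
  obtain ⟨hGcN', hCDFN', hMPCN', -⟩ := heq n' hn'2
  have hdN := hform n hn2
  have hdN' := hform n' hn'2
  have hvLn : vL n = 0 := (hthresh n hn2).mpr hn
  have hvLn' : vL n' = 0 := (hthresh n' hn'2).mpr hn'
  obtain ⟨hGzeroN, hGmidN⟩ := normalizeG F hF0 hn2 hdN hvLn hCDFN.1
  obtain ⟨hGzeroN', hGmidN'⟩ := normalizeG F hF0 hn'2 hdN' hvLn' hCDFN'.1
  have hβn : 0 < β n := hdN.2.2.2.2.1
  have hβn' : 0 < β n' := hdN'.2.2.2.2.1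
  have hρ0 : 0 < rr n := by have h := hdN.2.1; rwa [hvLn] at h
  have hρ0' : 0 < rr n' := by have h := hdN'.2.1; rwa [hvLn'] at h
  have hρM : rr n < vH n := hdN.2.2.1
  have hρM' : rr n' < vH n' := hdN'.2.2.1
  have hM1 : vH n ≤ 1 := hdN.2.2.2.1
  have hM1' : vH n' ≤ 1 := hdN'.2.2.2.1
  have hGtopN : ∀ v, vH n < v → v ≤ 1 → G n v = F v := hdN.2.2.2.2.2.2.2.2
  have hGtopN' : ∀ v, vH n' < v → v ≤ 1 → G n' v = F v := hdN'.2.2.2.2.2.2.2.2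
  have hG1N : G n 1 = 1 := hCDFN.2 1 le_rfl
  have hG1N' : G n' 1 = 1 := hCDFN'.2 1 le_rfl
  have hA1 := hMPCN.1
  have hA0 := hMPCN.2
  have hB1 := hMPCN'.1
  have hB0 := hMPCN'.2
  have hFii : ∀ a b : ℝ, a ∈ Icc (0:ℝ) 1 → b ∈ Icc (0:ℝ) 1 →
      IntervalIntegrable F volume a b :=
    fun a b ha hb => (hFc.mono (uIcc_subset_Icc ha hb)).intervalIntegrable
  -- the reservation values agree
  have hsid : ∀ m : ℕ, 2 ≤ m → 0 < rr m → rr m < 1 → (∀ v, v ≤ rr m → G m v = 0) →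
      Continuous (G m : ℝ → ℝ) → G m 1 = 1 →
      (∫ v in (0:ℝ)..1, (F v - G m v)) = 0 →
      s = (1 - rr m) - ∫ v in (0:ℝ)..1, F v := by
    intro m hm hr0 hr1 hzero hGc hG1 hM0
    have hGii : ∀ a b : ℝ, IntervalIntegrable (G m : ℝ → ℝ) volume a b := fun a b =>
      hGc.intervalIntegrable a b
    have hlc := layercake (G m) hGc hG1 hr1.le
    rw [← hsearch m hm, hlc]
    have e1 : (∫ t in (rr m)..1, (1 - G m t))
        = (∫ t in (rr m)..1, (1:ℝ)) - ∫ t in (rr m)..1, G m t :=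
      intervalIntegral.integral_sub intervalIntegrable_const (hGii _ _)
    have e2 : (∫ t in (rr m)..1, (1:ℝ)) = 1 - rr m := by
      rw [intervalIntegral.integral_const]; simp
    have e3 : (∫ t in (0:ℝ)..(rr m), G m t) = 0 := by
      have h4 : (∫ t in (0:ℝ)..(rr m), G m t) = ∫ t in (0:ℝ)..(rr m), (0:ℝ) := by
        apply intervalIntegral.integral_congr
        intro u hu
        rw [uIcc_of_le hr0.le] at hu
        exact hzero u hu.2
      rw [h4, intervalIntegral.integral_zero]
    have e4 : (∫ t in (0:ℝ)..(rr m), G m t) + (∫ t in (rr m)..1, G m t)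
        = ∫ t in (0:ℝ)..1, G m t :=
      intervalIntegral.integral_add_adjacent_intervals (hGii _ _) (hGii _ _)
    have e5 : (∫ t in (0:ℝ)..1, (F t - G m t))
        = (∫ t in (0:ℝ)..1, F t) - ∫ t in (0:ℝ)..1, G m t :=
      intervalIntegral.integral_sub (hFii 0 1 h0mem h1mem) (hGii _ _)
    rw [hM0] at e5
    rw [e1, e2]
    linarith
  have hr1n : rr n < 1 := lt_of_lt_of_le hρM hM1
  have hr1n' : rr n' < 1 := lt_of_lt_of_le hρM' hM1'
  have hs1 := hsid n hn2 hρ0 hr1n hGzeroN hGcN hG1N hA0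
  have hs2 := hsid n' hn'2 hρ0' hr1n' hGzeroN' hGcN' hG1N' hB0
  have hrr : rr n' = rr n := by linarith
  rw [hrr] at hGzeroN' hGmidN' hρM'
  have hk : 1 ≤ n - 1 := by omega
  have hkk' : n - 1 < n' - 1 := by omega
  obtain ⟨hpart1, hpart2⟩ := keyLemma hFc hF1 hFpos hFlt1 hFnn hFle1 hFconv hρ0 hk hkk'
    hβn hρM hM1 hβn' hρM' hM1' hGcN hGcN' hGzeroN hGzeroN' hGmidN hGmidN'
    hGtopN hGtopN' hG1N hG1N' hA1 hA0 hB1 hB0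
  refine ⟨⟨hpart1, ?_⟩, ?_⟩
  · have hsub : (∫ v in (0:ℝ)..1, (G n' v - G n v))
        = (∫ v in (0:ℝ)..1, (F v - G n v)) - (∫ v in (0:ℝ)..1, (F v - G n' v)) := by
      rw [← intervalIntegral.integral_sub
        ((hFii 0 1 h0mem h1mem).sub (hGcN.intervalIntegrable 0 1))
        ((hFii 0 1 h0mem h1mem).sub (hGcN'.intervalIntegrable 0 1))]
      apply intervalIntegral.integral_congr
      intro u _
      show G n' u - G n u = (F u - G n u) - (F u - G n' u)
      ring
    rw [hsub, hA0, hB0, sub_zero]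
  · obtain ⟨v, hv, hne⟩ := hpart2
    exact ⟨v, hv, hne⟩
end

section
/- Fix r ∈ (0, μ). For each integer n ≥ 2 let (β_n, v_H(n)) be the unique pair with β_n > 0 and v_H(n) ∈ (r, 1] such that the disclosure form with parameters (0, v_H(n), β_n, r) is an MPC of F and its value at v_H(n) equals F(v_H(n)) (such a pair exists and is unique because E_F[v] = μ > r). Then there exists an integer n̂ ≥ 2 such that for every n > n̂: v_H(n) < 1 and satisfies ∫_0^{v_H(n)} F(v) dv = ((n−1)/n) · F(v_H(n)) · (v_H(n) − r), equivalently E_F[v | v < v_H(n)] = v_H(n)/n + ((n−1)/n) r; moreover v_H(n) is strictly decreasing in n on (n̂, ∞) and converges as n → ∞ to the unique v_H^∞ ∈ (r, 1) with E_F[v | v < v_H^∞] = r. -/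
open MeasureTheory Set Filter

set_option maxHeartbeats 2000000

section Helpers
open intervalIntegral

section Aux

variable {F f : ℝ → ℝ}

lemma eqOn_intervalIntegrable {G h : ℝ → ℝ} {a b : ℝ}
    (hf : IntervalIntegrable h volume a b) (heq : EqOn G h (uIcc a b)) :
    IntervalIntegrable G volume a b := by
  refine hf.congr ?_
  intro x hx
  exact (heq (uIoc_subset_uIcc hx)).symm

lemma eqOn_integral_eq {G h : ℝ → ℝ} {a b : ℝ} (heq : EqOn G h (uIcc a b)) :
    ∫ v in a..b, G v = ∫ v in a..b, h v :=
  integral_congr heq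

lemma f_intInt (hf_cont : ContinuousOn f (Icc 0 1)) {a b : ℝ}
    (ha : a ∈ Icc (0:ℝ) 1) (hb : b ∈ Icc (0:ℝ) 1) :
    IntervalIntegrable f volume a b := by
  apply ContinuousOn.intervalIntegrable
  exact hf_cont.mono (uIcc_subset_Icc ha hb)

lemma F_hasDeriv (hf_cont : ContinuousOn f (Icc 0 1))
    (hF : ∀ z ∈ Icc (0:ℝ) 1, F z = ∫ t in (0:ℝ)..z, f t) :
    ∀ x ∈ Ioo (0:ℝ) 1, HasDerivAt F (f x) x := by
  intro x hx
  have hnh : Icc (0:ℝ) 1 ∈ nhds x := Icc_mem_nhds hx.1 hx.2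
  have h1 : HasDerivAt (fun z => ∫ t in (0:ℝ)..z, f t) (f x) x := by
    refine integral_hasDerivAt_right
      (f_intInt hf_cont ⟨le_rfl, zero_le_one⟩ ⟨hx.1.le, hx.2.le⟩) ?_ ?_
    · exact (hf_cont.mono Ioo_subset_Icc_self).stronglyMeasurableAtFilter isOpen_Ioo x hx
    · exact hf_cont.continuousAt hnh
  refine h1.congr_of_eventuallyEq ?_
  filter_upwards [hnh] with z hz using hF z hz

lemma F_cont (hf_cont : ContinuousOn f (Icc 0 1))
    (hF : ∀ z ∈ Icc (0:ℝ) 1, F z = ∫ t in (0:ℝ)..z, f t) :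
    ContinuousOn F (Icc 0 1) := by
  have h : ContinuousOn (fun x => ∫ t in (0:ℝ)..x, f t) (uIcc 0 1) :=
    continuousOn_primitive_interval (by
      rw [uIcc_of_le zero_le_one]
      exact hf_cont.integrableOn_Icc)
  rw [uIcc_of_le zero_le_one] at h
  exact h.congr hF

lemma F_intInt (hf_cont : ContinuousOn f (Icc 0 1))
    (hF : ∀ z ∈ Icc (0:ℝ) 1, F z = ∫ t in (0:ℝ)..z, f t) {a b : ℝ}
    (ha : a ∈ Icc (0:ℝ) 1) (hb : b ∈ Icc (0:ℝ) 1) :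
    IntervalIntegrable F volume a b :=
  ((F_cont hf_cont hF).mono (uIcc_subset_Icc ha hb)).intervalIntegrable

lemma F_zero (hF : ∀ z ∈ Icc (0:ℝ) 1, F z = ∫ t in (0:ℝ)..z, f t) : F 0 = 0 := by
  rw [hF 0 ⟨le_rfl, zero_le_one⟩, integral_same]

lemma F_strictMono (hf_cont : ContinuousOn f (Icc 0 1))
    (hf_pos : ∀ v ∈ Icc (0:ℝ) 1, 0 < f v)
    (hF : ∀ z ∈ Icc (0:ℝ) 1, F z = ∫ t in (0:ℝ)..z, f t) :
    StrictMonoOn F (Icc 0 1) := by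
  intro a ha b hb hab
  have h1 : F b - F a = ∫ t in a..b, f t := by
    rw [hF a ha, hF b hb]
    rw [← integral_interval_sub_left (f_intInt hf_cont ⟨le_rfl, zero_le_one⟩ hb)
      (f_intInt hf_cont ⟨le_rfl, zero_le_one⟩ ha)]
  have h2 : 0 < ∫ t in a..b, f t := by
    apply intervalIntegral_pos_of_pos_on (f_intInt hf_cont ha hb)
    · intro x hx
      exact hf_pos x ⟨le_trans ha.1 hx.1.le, le_trans hx.2.le hb.2⟩
    · exact hab
  linarith

end Aux

theorem test : True := trivial
open MeasureTheory Set Filter intervalIntegral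

section Aux2
variable {F f : ℝ → ℝ}

-- integration by parts: ∫_0^w (F v + v f v) = w F w
lemma ibp_aux (hf_cont : ContinuousOn f (Icc 0 1))
    (hF : ∀ z ∈ Icc (0:ℝ) 1, F z = ∫ t in (0:ℝ)..z, f t)
    (hFc : ContinuousOn F (Icc 0 1))
    (hFd : ∀ x ∈ Ioo (0:ℝ) 1, HasDerivAt F (f x) x)
    {w : ℝ} (hw : w ∈ Icc (0:ℝ) 1) :
    ∫ v in (0:ℝ)..w, (F v + v * f v) = w * F w := by
  have hF0 : F 0 = 0 := by rw [hF 0 ⟨le_rfl, zero_le_one⟩, integral_same]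
  have key : ∫ v in (0:ℝ)..w, (F v + v * f v) = w * F w - 0 * F 0 := by
    apply integral_eq_sub_of_hasDeriv_right_of_le hw.1
    · exact (continuousOn_id.mul (hFc.mono (Icc_subset_Icc le_rfl hw.2)))
    · intro x hx
      have hx' : x ∈ Ioo (0:ℝ) 1 := ⟨hx.1, lt_of_lt_of_le hx.2 hw.2⟩
      have := (hasDerivAt_id x).mul (hFd x hx')
      simp only [one_mul, id] at this
      exact (this.congr_deriv (by ring)).hasDerivWithinAt
    · apply IntervalIntegrable.add
      · exact ((hFc.mono (Icc_subset_Icc le_rfl hw.2)).mono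
          (by rw [uIcc_of_le hw.1])).intervalIntegrable
      · exact (ContinuousOn.intervalIntegrable (by
          apply continuousOn_id.mul
          apply hf_cont.mono
          rw [uIcc_of_le hw.1]
          exact Icc_subset_Icc le_rfl hw.2))
  simpa using key

lemma ibp (hf_cont : ContinuousOn f (Icc 0 1))
    (hF : ∀ z ∈ Icc (0:ℝ) 1, F z = ∫ t in (0:ℝ)..z, f t)
    (hFc : ContinuousOn F (Icc 0 1))
    (hFd : ∀ x ∈ Ioo (0:ℝ) 1, HasDerivAt F (f x) x)
    {w : ℝ} (hw : w ∈ Icc (0:ℝ) 1) :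
    ∫ v in (0:ℝ)..w, v * f v = w * F w - ∫ v in (0:ℝ)..w, F v := by
  have hFi : IntervalIntegrable F volume 0 w :=
    ((hFc.mono (Icc_subset_Icc le_rfl hw.2)).mono
      (by rw [uIcc_of_le hw.1])).intervalIntegrable
  have hvfi : IntervalIntegrable (fun v => v * f v) volume 0 w :=
    (ContinuousOn.intervalIntegrable (by
      apply continuousOn_id.mul
      apply hf_cont.mono
      rw [uIcc_of_le hw.1]
      exact Icc_subset_Icc le_rfl hw.2))
  have := ibp_aux hf_cont hF hFc hFd hw
  rw [integral_add hFi hvfi] at this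
  linarith

-- derivative of Ψ c at interior points
lemma psi_hasDeriv (hf_cont : ContinuousOn f (Icc 0 1))
    (hFc : ContinuousOn F (Icc 0 1))
    (hFd : ∀ x ∈ Ioo (0:ℝ) 1, HasDerivAt F (f x) x)
    (c r : ℝ) {w : ℝ} (hw : w ∈ Ioo (0:ℝ) 1) :
    HasDerivAt (fun w => (∫ v in (0:ℝ)..w, F v) - c * F w * (w - r))
      (F w - c * (f w * (w - r) + F w)) w := by
  have hnh : Icc (0:ℝ) 1 ∈ nhds w := Icc_mem_nhds hw.1 hw.2
  have hA : HasDerivAt (fun u => ∫ v in (0:ℝ)..u, F v) (F w) w := by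
    refine integral_hasDerivAt_right
      (((hFc.mono (Icc_subset_Icc le_rfl hw.2.le)).mono
        (by rw [uIcc_of_le hw.1.le])).intervalIntegrable) ?_ ?_
    · exact (hFc.mono Ioo_subset_Icc_self).stronglyMeasurableAtFilter isOpen_Ioo w hw
    · exact hFc.continuousAt hnh
  have hB : HasDerivAt (fun u => c * F u * (u - r))
      (c * (f w * (w - r) + F w)) w := by
    have h1 : HasDerivAt (fun u => c * F u) (c * f w) w := (hFd w hw).const_mul c
    have h2 : HasDerivAt (fun u => u - r) 1 w := (hasDerivAt_id w).sub_const r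
    have := h1.mul h2
    exact this.congr_deriv (by ring)
  exact hA.sub hB

lemma psi_cont (hFc : ContinuousOn F (Icc 0 1)) (c r : ℝ) {a b : ℝ}
    (ha : a ∈ Icc (0:ℝ) 1) (hb : b ∈ Icc (0:ℝ) 1) (hab : a ≤ b) :
    ContinuousOn (fun w => (∫ v in (0:ℝ)..w, F v) - c * F w * (w - r)) (Icc a b) := by
  apply ContinuousOn.sub
  · have h : ContinuousOn (fun x => ∫ t in (0:ℝ)..x, F t) (uIcc 0 1) :=
      continuousOn_primitive_interval (by
        rw [uIcc_of_le zero_le_one]; exact hFc.integrableOn_Icc)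
    rw [uIcc_of_le zero_le_one] at h
    exact h.mono (Icc_subset_Icc ha.1 hb.2)
  · exact ((continuousOn_const.mul (hFc.mono (Icc_subset_Icc ha.1 hb.2))).mul
      (continuousOn_id.sub continuousOn_const))

lemma psi_strictAnti (hf_cont : ContinuousOn f (Icc 0 1))
    (hFc : ContinuousOn F (Icc 0 1))
    (hFd : ∀ x ∈ Ioo (0:ℝ) 1, HasDerivAt F (f x) x)
    (c r : ℝ) {a : ℝ} (ha : a ∈ Icc (0:ℝ) 1)
    (hneg : ∀ w ∈ Ioo a 1, F w - c * (f w * (w - r) + F w) < 0) :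
    StrictAntiOn (fun w => (∫ v in (0:ℝ)..w, F v) - c * F w * (w - r)) (Icc a 1) := by
  apply strictAntiOn_of_deriv_neg (convex_Icc a 1)
  · exact psi_cont hFc c r ha ⟨zero_le_one, le_rfl⟩ ha.2
  · intro x hx
    rw [interior_Icc] at hx
    have hx' : x ∈ Ioo (0:ℝ) 1 := ⟨lt_of_le_of_lt ha.1 hx.1, hx.2⟩
    rw [(psi_hasDeriv hf_cont hFc hFd c r hx').deriv]
    exact hneg x hx

end Aux2


section Aux3
variable {F f G : ℝ → ℝ} {n : ℕ} {β r vH : ℝ}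

lemma eqOn_intervalIntegrable' {G h : ℝ → ℝ} {a b : ℝ}
    (hf : IntervalIntegrable h volume a b) (heq : EqOn G h (uIcc a b)) :
    IntervalIntegrable G volume a b := by
  refine hf.congr ?_
  intro x hx
  exact (heq (uIoc_subset_uIcc hx)).symm

lemma rpow_cont {p : ℝ} (hp : 0 < p) :
    Continuous (fun v : ℝ => (min (β * (v - r)) 1) ^ p) := by
  have crp : Continuous (fun x : ℝ => x ^ p) := by
    refine continuous_iff_continuousAt.2 (fun x => ?_)
    exact Real.continuousAt_rpow_const x p (Or.inr hp.le)
  exact crp.comp (((continuous_const.mul (continuous_id.sub continuous_const))).min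
    continuous_const)

lemma rpow_integral {β p : ℝ} (hβ : 0 < β) (hp : 0 < p) {r w : ℝ} (hrw : r ≤ w) :
    ∫ v in r..w, (β * (v - r)) ^ p = β ^ p * (w - r) ^ (p + 1) / (p + 1) := by
  have h1 : ∫ v in r..w, (β * (v - r)) ^ p = ∫ u in (0:ℝ)..(w - r), (β * u) ^ p := by
    have := intervalIntegral.integral_comp_sub_right
      (a := r) (b := w) (fun u => (β * u) ^ p) r
    simpa using this
  rw [h1]
  have h2 : ∫ u in (0:ℝ)..(w-r), (β*u)^p = ∫ u in (0:ℝ)..(w-r), β^p * u^p := by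
    apply integral_congr; intro x hx
    rw [uIcc_of_le (by linarith)] at hx
    exact Real.mul_rpow hβ.le hx.1
  rw [h2, intervalIntegral.integral_const_mul, integral_rpow (Or.inl (by linarith))]
  rw [Real.zero_rpow (by positivity : (0:ℝ) < p + 1).ne']
  ring

/-- Main extraction: `∫_0^{vH} F = ∫_r^{vH} (min (β(v-r)) 1)^{1/(n-1)}`. -/
lemma extract (hF0 : F 0 = 0)
    (hFc : ContinuousOn F (Icc 0 1))
    (hn : 2 ≤ n)
    (hMPC : MPCof G F) (htouch : G vH = F vH)
    (hDF : DisclosureForm F n 0 vH β r G) :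
    ∫ v in (0:ℝ)..vH, F v
      = ∫ v in r..vH, (min (β * (v - r)) 1) ^ (((n : ℝ) - 1)⁻¹) := by
  obtain ⟨-, hr0, hrvH, hvH1, hβ, hGlow, hGgap, hGmid', hGhigh⟩ := hDF
  set p : ℝ := ((n : ℝ) - 1)⁻¹ with hpdef
  have hn1 : (1:ℝ) ≤ (n:ℝ) - 1 := by
    have : (2:ℝ) ≤ (n:ℝ) := by exact_mod_cast hn
    linarith
  have hp : 0 < p := inv_pos.2 (by linarith)
  have hGmid : ∀ v, r ≤ v → v ≤ vH → G v = (min (β * (v - r)) 1) ^ p := by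
    intro v h1 h2
    rw [hGmid' v h1 h2, hF0, zero_pow (by omega : n - 1 ≠ 0), zero_add]
  have h0vH : (0:ℝ) ≤ vH := le_trans hr0.le hrvH.le
  -- G = 0 on [0, r]
  have hG0 : EqOn G (fun _ => (0:ℝ)) (Icc 0 r) := by
    intro v hv
    show G v = 0
    rcases lt_or_eq_of_le hv.2 with hvr | hvr
    · rcases lt_or_eq_of_le hv.1 with h0v | h0v
      · rw [hGgap v h0v hvr, hF0]
      · rw [← h0v, hGlow 0 le_rfl, hF0]
    · rw [hvr, hGmid r le_rfl hrvH.le]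
      simp [Real.zero_rpow hp.ne']
  -- G = h on [r, vH]
  have hGh : EqOn G (fun v => (min (β * (v - r)) 1) ^ p) (Icc r vH) := fun v hv =>
    hGmid v hv.1 hv.2
  -- F - G = 0 on [vH, 1]
  have hFG0 : EqOn (fun v => F v - G v) (fun _ => (0:ℝ)) (Icc vH 1) := by
    intro v hv
    show F v - G v = 0
    rcases lt_or_eq_of_le hv.1 with h1 | h1
    · rw [hGhigh v h1 hv.2]; simp
    · rw [← h1, htouch]; simp
  -- integrabilities
  have hi1 : IntervalIntegrable G volume 0 r :=
    eqOn_intervalIntegrable' intervalIntegrable_const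
      (by rwa [uIcc_of_le hr0.le])
  have hi2 : IntervalIntegrable G volume r vH :=
    eqOn_intervalIntegrable' ((rpow_cont hp).intervalIntegrable r vH)
      (by rwa [uIcc_of_le hrvH.le])
  have hiG : IntervalIntegrable G volume 0 vH := hi1.trans hi2
  have hiF : IntervalIntegrable F volume 0 vH :=
    ((hFc.mono (Icc_subset_Icc le_rfl hvH1)).mono
      (by rw [uIcc_of_le h0vH])).intervalIntegrable
  have hint1 : IntervalIntegrable (fun v => F v - G v) volume 0 vH := hiF.sub hiG
  have hint2 : IntervalIntegrable (fun v => F v - G v) volume vH 1 :=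
    eqOn_intervalIntegrable' intervalIntegrable_const (by rwa [uIcc_of_le hvH1])
  have hz2 : (∫ v in vH..(1:ℝ), (F v - G v)) = 0 := by
    rw [integral_congr (g := fun _ => (0:ℝ)) (by rwa [uIcc_of_le hvH1])]
    simp
  have hsplit := integral_add_adjacent_intervals hint1 hint2
  rw [hMPC.2, hz2, add_zero] at hsplit
  rw [integral_sub hiF hiG] at hsplit
  have hFeqG : ∫ v in (0:ℝ)..vH, F v = ∫ v in (0:ℝ)..vH, G v := by linarith
  rw [hFeqG]
  have hsplitG := integral_add_adjacent_intervals hi1 hi2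
  have hz1 : (∫ v in (0:ℝ)..r, G v) = 0 := by
    rw [integral_congr (g := fun _ => (0:ℝ)) (by rwa [uIcc_of_le hr0.le])]
    simp
  rw [← hsplitG, hz1, zero_add]
  exact integral_congr (by rwa [uIcc_of_le hrvH.le])

end Aux3

section Aux4
variable {F f G : ℝ → ℝ} {n : ℕ} {β r vH : ℝ}

/-- If `vH < 1`, the key equation holds. -/
lemma key_equation (hF0 : F 0 = 0)
    (hFc : ContinuousOn F (Icc 0 1)) (hF1 : F 1 = 1)
    (hFsm : StrictMonoOn F (Icc 0 1))
    (hn : 2 ≤ n)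
    (hMPC : MPCof G F) (htouch : G vH = F vH)
    (hDF : DisclosureForm F n 0 vH β r G) (hvHlt : vH < 1) :
    ∫ v in (0:ℝ)..vH, F v = ((n : ℝ) - 1) / n * F vH * (vH - r) := by
  have hext := extract hF0 hFc hn hMPC htouch hDF
  obtain ⟨-, hr0, hrvH, hvH1, hβ, hGlow, hGgap, hGmid', hGhigh⟩ := hDF
  set p : ℝ := ((n : ℝ) - 1)⁻¹ with hpdef
  have hn1 : (1:ℝ) ≤ (n:ℝ) - 1 := by
    have : (2:ℝ) ≤ (n:ℝ) := by exact_mod_cast hn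
    linarith
  have hp : 0 < p := inv_pos.2 (by linarith)
  have hs : 0 < vH - r := by linarith
  have hFvH : F vH = (min (β * (vH - r)) 1) ^ p := by
    rw [← htouch, hGmid' vH hrvH.le le_rfl, hF0, zero_pow (by omega : n - 1 ≠ 0), zero_add]
  have hFvHlt : F vH < 1 := by
    have := hFsm ⟨by linarith, hvH1⟩ ⟨zero_le_one, le_rfl⟩ hvHlt
    rwa [hF1] at this
  have hmlt : β * (vH - r) < 1 := by
    rcases le_or_gt 1 (β * (vH - r)) with h | h
    · exfalso
      rw [min_eq_right h, Real.one_rpow] at hFvH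
      linarith
    · exact h
  have heq2 : (∫ v in r..vH, (min (β * (v - r)) 1) ^ p)
      = ∫ v in r..vH, (β * (v - r)) ^ p := by
    apply integral_congr
    intro v hv
    rw [uIcc_of_le hrvH.le] at hv
    have : β * (v - r) ≤ 1 := by nlinarith [hv.2, hβ.le]
    simp [min_eq_left this]
  rw [hext, heq2, rpow_integral hβ hp hrvH.le]
  rw [min_eq_left hmlt.le, Real.mul_rpow hβ.le hs.le] at hFvH
  rw [hFvH]
  have hsp : (vH - r) ^ (p + 1) = (vH - r) ^ p * (vH - r) := by
    rw [Real.rpow_add hs, Real.rpow_one]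
  rw [hsp, hpdef]
  have hne : (n:ℝ) - 1 ≠ 0 := by linarith
  have hne2 : (n:ℝ) ≠ 0 := by linarith
  field_simp
  ring

/-- If `vH = 1` and `n` is large, contradiction. -/
lemma no_touch_at_one (hF0 : F 0 = 0)
    (hFc : ContinuousOn F (Icc 0 1)) (hF1 : F 1 = 1)
    {μ : ℝ} (hIF1 : (∫ v in (0:ℝ)..1, F v) = 1 - μ)
    (hn : 2 ≤ n) (hμr : r < μ)
    (hMPC : MPCof G F) (htouch : G 1 = F 1)
    (hDF : DisclosureForm F n 0 1 β r G)
    (hngt : (1 - r)/(μ - r) < (n:ℝ)) : False := by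
  have hext := extract hF0 hFc hn hMPC htouch hDF
  obtain ⟨-, hr0, hr1, -, hβ, hGlow, hGgap, hGmid', hGhigh⟩ := hDF
  set p : ℝ := ((n : ℝ) - 1)⁻¹ with hpdef
  have hn1 : (1:ℝ) ≤ (n:ℝ) - 1 := by
    have : (2:ℝ) ≤ (n:ℝ) := by exact_mod_cast hn
    linarith
  have hp : 0 < p := inv_pos.2 (by linarith)
  have hF1m : F 1 = (min (β * (1 - r)) 1) ^ p := by
    rw [← htouch, hGmid' 1 hr1.le le_rfl, hF0, zero_pow (by omega : n - 1 ≠ 0), zero_add]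
  have hge : 1 ≤ β * (1 - r) := by
    by_contra hlt
    push_neg at hlt
    rw [min_eq_left hlt.le] at hF1m
    have : (β * (1 - r)) ^ p < 1 :=
      Real.rpow_lt_one (mul_nonneg hβ.le (by linarith)) hlt hp
    rw [hF1] at hF1m
    linarith
  set t : ℝ := β⁻¹ with htdef
  have ht0 : 0 < t := inv_pos.2 hβ
  have hβt : β * t = 1 := mul_inv_cancel₀ hβ.ne'
  have ht1 : t ≤ 1 - r := by nlinarith
  set s0 : ℝ := r + t with hs0def
  have hrs0 : r ≤ s0 := by linarith
  have hs01 : s0 ≤ 1 := by linarith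
  have hi_left : IntervalIntegrable (fun v => (min (β * (v - r)) 1) ^ p) volume r s0 :=
    (rpow_cont hp).intervalIntegrable r s0
  have hi_right : IntervalIntegrable (fun v => (min (β * (v - r)) 1) ^ p) volume s0 1 :=
    (rpow_cont hp).intervalIntegrable s0 1
  have hsplit := integral_add_adjacent_intervals hi_left hi_right
  have hleft : (∫ v in r..s0, (min (β * (v - r)) 1) ^ p)
      = β ^ p * t ^ (p + 1) / (p + 1) := by
    have : (∫ v in r..s0, (min (β * (v - r)) 1) ^ p)
        = ∫ v in r..s0, (β * (v - r)) ^ p := by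
      apply integral_congr
      intro v hv
      rw [uIcc_of_le hrs0] at hv
      have : β * (v - r) ≤ 1 := by nlinarith [hv.2, hβ.le]
      simp [min_eq_left this]
    rw [this, rpow_integral hβ hp hrs0]
    congr 2
    simp [hs0def]
  have hright : (∫ v in s0..(1:ℝ), (min (β * (v - r)) 1) ^ p) = 1 - s0 := by
    have : (∫ v in s0..(1:ℝ), (min (β * (v - r)) 1) ^ p)
        = ∫ v in s0..(1:ℝ), (1:ℝ) := by
      apply integral_congr
      intro v hv
      rw [uIcc_of_le hs01] at hv
      have h1 : 1 ≤ β * (v - r) := by nlinarith [hv.1, hβ.le]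
      simp [min_eq_right h1, Real.one_rpow]
    rw [this]
    simp
  have hbt : β ^ p * t ^ (p + 1) = t := by
    have h1 : t ^ (p + 1) = t ^ p * t := by rw [Real.rpow_add ht0, Real.rpow_one]
    have h2 : β ^ p * t ^ p = 1 := by
      rw [← Real.mul_rpow hβ.le ht0.le, hβt, Real.one_rpow]
    rw [h1, ← mul_assoc, h2, one_mul]
  rw [hleft, hright, hbt] at hsplit
  rw [hext.symm, hIF1] at hsplit
  -- hsplit : t / (p+1) + (1 - s0) = 1 - μ
  have hne : (n:ℝ) - 1 ≠ 0 := by linarith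
  have hne2 : (n:ℝ) ≠ 0 := by linarith
  have hpn : t / (p + 1) = t * ((n:ℝ) - 1) / n := by
    rw [hpdef]; field_simp; ring
  rw [hpn] at hsplit
  have hμeq : μ = r + t / n := by
    have h3 : t * ((n:ℝ)-1)/n = t - t/n := by field_simp
    rw [h3] at hsplit
    simp only [hs0def] at hsplit
    linarith
  have hn0 : (0:ℝ) < n := by linarith
  have hμr' : (0:ℝ) < μ - r := by linarith
  rw [div_lt_iff₀ hμr'] at hngt
  have h4 : t / (n:ℝ) ≤ (1 - r)/n := by gcongr
  have h5 : (1 - r)/(n:ℝ) < μ - r := by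
    rw [div_lt_iff₀ hn0]; nlinarith
  linarith

end Aux4


end Helpers

open intervalIntegral in
/-- Properties of the contact point `v_H(n)` with `v_L = 0`. Fix
`r ∈ (0, μ)` and for each `n ≥ 2` let `(β_n, v_H(n))` be the unique pair for which the
disclosure form with parameters `(0, v_H(n), β_n, r)` is an MPC of `F` touching `F` at
`v_H(n)`. Then for all large `n`, `v_H(n) < 1` and satisfies
`∫_0^{v_H(n)} F = ((n−1)/n) F(v_H(n)) (v_H(n) − r)`, equivalently
`E_F[v | v < v_H(n)] = v_H(n)/n + ((n−1)/n) r`; moreover `v_H(n)` strictly decreases and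
converges to the unique `v_H^∞ ∈ (r,1)` with `E_F[v | v < v_H^∞] = r`. -/
theorem stmt18 (F f : ℝ → ℝ) (μ : ℝ)
    (hf_cont : ContinuousOn f (Set.Icc 0 1))
    (hf_pos : ∀ v ∈ Set.Icc (0 : ℝ) 1, 0 < f v)
    (hF : ∀ z ∈ Set.Icc (0 : ℝ) 1, F z = ∫ t in (0 : ℝ)..z, f t)
    (hF1 : F 1 = 1)
    (hμ : μ = ∫ v in (0 : ℝ)..1, v * f v)
    (hFconv : ConvexOn ℝ (Set.Icc (0 : ℝ) 1) F)
    (r : ℝ) (hr : r ∈ Set.Ioo (0 : ℝ) μ)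
    (βn vHn : ℕ → ℝ)
    (hpair : ∀ n : ℕ, 2 ≤ n → 0 < βn n ∧ r < vHn n ∧ vHn n ≤ 1 ∧
      ∃ G : ℝ → ℝ, MPCof G F ∧ G (vHn n) = F (vHn n) ∧
        DisclosureForm F n 0 (vHn n) (βn n) r G) :
    ∃ nhat : ℕ, 2 ≤ nhat ∧
      (∀ n : ℕ, nhat < n →
        vHn n < 1 ∧
        (∫ v in (0 : ℝ)..(vHn n), F v)
          = ((n : ℝ) - 1) / n * F (vHn n) * (vHn n - r) ∧
        (∫ v in (0 : ℝ)..(vHn n), v * f v) / F (vHn n)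
          = vHn n / n + ((n : ℝ) - 1) / n * r) ∧
      (∀ n n' : ℕ, nhat < n → n < n' → vHn n' < vHn n) ∧
      ∃ vHinf : ℝ, vHinf ∈ Set.Ioo r 1 ∧
        (∫ v in (0 : ℝ)..vHinf, v * f v) / F vHinf = r ∧
        (∀ w ∈ Set.Ioo r 1, (∫ v in (0 : ℝ)..w, v * f v) / F w = r → w = vHinf) ∧
        Filter.Tendsto (fun n => vHn n) Filter.atTop (nhds vHinf) := by
  obtain ⟨hr0, hrμ⟩ := hr
  have hFc : ContinuousOn F (Icc 0 1) := F_cont hf_cont hF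
  have hFd : ∀ x ∈ Ioo (0:ℝ) 1, HasDerivAt F (f x) x := F_hasDeriv hf_cont hF
  have hF0 : F 0 = 0 := F_zero (f := f) hF
  have hFsm : StrictMonoOn F (Icc 0 1) := F_strictMono hf_cont hf_pos hF
  have hFmono : MonotoneOn F (Icc 0 1) := hFsm.monotoneOn
  -- basic positivity of F
  have hFpos : ∀ w ∈ Ioc (0:ℝ) 1, 0 < F w := by
    intro w hw
    have := hFsm ⟨le_rfl, zero_le_one⟩ ⟨hw.1.le, hw.2⟩ hw.1
    rwa [hF0] at this
  have hFle1 : ∀ w ∈ Icc (0:ℝ) 1, F w ≤ 1 := by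
    intro w hw
    have := hFmono hw ⟨zero_le_one, le_rfl⟩ hw.2
    rwa [hF1] at this
  have hFnn : ∀ w ∈ Icc (0:ℝ) 1, 0 ≤ F w := by
    intro w hw
    rcases eq_or_lt_of_le hw.1 with h | h
    · rw [← h, hF0]
    · exact (hFpos w ⟨h, hw.2⟩).le
  -- ∫_0^1 F = 1 - μ
  have hIF1 : (∫ v in (0:ℝ)..1, F v) = 1 - μ := by
    have h := ibp hf_cont hF hFc hFd ⟨zero_le_one, le_rfl⟩
    rw [hF1] at h
    rw [hμ]
    linarith
  have hFint : ∀ w ∈ Icc (0:ℝ) 1, IntervalIntegrable F volume 0 w := by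
    intro w hw
    exact ((hFc.mono (Icc_subset_Icc le_rfl hw.2)).mono
      (by rw [uIcc_of_le hw.1])).intervalIntegrable
  have hIF1pos : 0 < ∫ v in (0:ℝ)..1, F v := by
    apply intervalIntegral_pos_of_pos_on (hFint 1 ⟨zero_le_one, le_rfl⟩)
    · intro x hx
      exact hFpos x ⟨hx.1, hx.2.le⟩
    · exact zero_lt_one
  have hμ1 : μ < 1 := by linarith
  have hr1 : r < 1 := lt_trans hrμ hμ1
  -- ψ := Ψ 1 facts
  have hanti1 : StrictAntiOn
      (fun w => (∫ v in (0:ℝ)..w, F v) - 1 * F w * (w - r)) (Icc r 1) := by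
    apply psi_strictAnti hf_cont hFc hFd 1 r ⟨hr0.le, hr1.le⟩
    intro w hw
    have hfw := hf_pos w ⟨le_trans hr0.le hw.1.le, hw.2.le⟩
    nlinarith [hw.1]
  have hcont1 : ContinuousOn
      (fun w => (∫ v in (0:ℝ)..w, F v) - 1 * F w * (w - r)) (Icc r 1) :=
    psi_cont hFc 1 r ⟨hr0.le, hr1.le⟩ ⟨zero_le_one, le_rfl⟩ hr1.le
  have hψr : 0 < (∫ v in (0:ℝ)..r, F v) - 1 * F r * (r - r) := by
    have : 0 < ∫ v in (0:ℝ)..r, F v := by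
      apply intervalIntegral_pos_of_pos_on (hFint r ⟨hr0.le, hr1.le⟩)
      · intro x hx
        exact hFpos x ⟨hx.1, le_trans hx.2.le hr1.le⟩
      · exact hr0
    simpa using this
  have hψ1 : (∫ v in (0:ℝ)..1, F v) - 1 * F 1 * (1 - r) < 0 := by
    rw [hIF1, hF1]; linarith
  -- existence of vinf
  obtain ⟨vinf, hvinfIoo, hvinf0⟩ :
      ∃ vinf ∈ Ioo r 1, (∫ v in (0:ℝ)..vinf, F v) - 1 * F vinf * (vinf - r) = 0 := by
    have h0mem : (0:ℝ) ∈ Ioo ((∫ v in (0:ℝ)..1, F v) - 1 * F 1 * (1 - r))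
        ((∫ v in (0:ℝ)..r, F v) - 1 * F r * (r - r)) := ⟨hψ1, hψr⟩
    have := intermediate_value_Ioo' hr1.le hcont1 h0mem
    obtain ⟨w, hw, hw0⟩ := this
    exact ⟨w, hw, hw0⟩
  have hvinf01 : vinf ∈ Icc (0:ℝ) 1 := ⟨le_trans hr0.le hvinfIoo.1.le, hvinfIoo.2.le⟩
  -- conversion between the conditional-mean form and ψ = 0
  have hconv : ∀ w ∈ Ioo r 1,
      ((∫ v in (0:ℝ)..w, v * f v) / F w = r ↔
        (∫ v in (0:ℝ)..w, F v) - 1 * F w * (w - r) = 0) := by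
    intro w hw
    have hw01 : w ∈ Icc (0:ℝ) 1 := ⟨le_trans hr0.le hw.1.le, hw.2.le⟩
    have hFw : 0 < F w := hFpos w ⟨lt_trans hr0 hw.1, hw.2.le⟩
    rw [ibp hf_cont hF hFc hFd hw01]
    rw [div_eq_iff hFw.ne']
    constructor
    · intro h; nlinarith
    · intro h; nlinarith
  -- the minimum of f
  obtain ⟨x₀, hx₀mem, hx₀min⟩ :=
    isCompact_Icc.exists_isMinOn (nonempty_Icc.2 zero_le_one) hf_cont
  rw [isMinOn_iff] at hx₀min
  set mf : ℝ := f x₀ with hmf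
  have hmfpos : 0 < mf := hf_pos x₀ hx₀mem
  set m : ℝ := mf * (vinf - r) with hm
  have hmpos : 0 < m := mul_pos hmfpos (by linarith [hvinfIoo.1])
  -- choice of nhat
  set nhat : ℕ := max 2 (max (Nat.ceil ((1 - r)/(μ - r))) (Nat.ceil (2/m))) with hnhat
  have hnhat2 : 2 ≤ nhat := le_max_left _ _
  refine ⟨nhat, hnhat2, ?_⟩
  have hbig : ∀ n : ℕ, nhat < n →
      (1 - r)/(μ - r) < (n:ℝ) ∧ 2/m < (n:ℝ) ∧ 2 ≤ n := by
    intro n hn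
    have h1 : Nat.ceil ((1 - r)/(μ - r)) < n :=
      lt_of_le_of_lt (le_trans (le_max_left _ _) (le_max_right _ _)) hn
    have h2 : Nat.ceil (2/m) < n :=
      lt_of_le_of_lt (le_trans (le_max_right _ _) (le_max_right _ _)) hn
    refine ⟨lt_of_le_of_lt (Nat.le_ceil _) (by exact_mod_cast h1),
      lt_of_le_of_lt (Nat.le_ceil _) (by exact_mod_cast h2), by omega⟩
  -- main per-n facts
  have hmain : ∀ n : ℕ, nhat < n →
      vHn n < 1 ∧
      (∫ v in (0:ℝ)..(vHn n), F v)
        = ((n : ℝ) - 1) / n * F (vHn n) * (vHn n - r) ∧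
      (∫ v in (0:ℝ)..(vHn n), v * f v) / F (vHn n)
        = vHn n / n + ((n : ℝ) - 1) / n * r := by
    intro n hn
    obtain ⟨hng, -, hn2⟩ := hbig n hn
    obtain ⟨hβpos, hrvH, hvH1, G, hMPC, htouch, hDF⟩ := hpair n hn2
    have hlt1 : vHn n < 1 := by
      rcases lt_or_eq_of_le hvH1 with h | h
      · exact h
      · exfalso
        rw [h] at hDF htouch
        exact no_touch_at_one hF0 hFc hF1 hIF1 hn2 hrμ hMPC htouch hDF hng
    have hkey := key_equation hF0 hFc hF1 hFsm hn2 hMPC htouch hDF hlt1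
    refine ⟨hlt1, hkey, ?_⟩
    have hw01 : vHn n ∈ Icc (0:ℝ) 1 := ⟨le_trans hr0.le hrvH.le, hvH1⟩
    have hFw : 0 < F (vHn n) := hFpos _ ⟨lt_trans hr0 hrvH, hvH1⟩
    rw [ibp hf_cont hF hFc hFd hw01, hkey]
    have hn0 : ((n:ℝ)) ≠ 0 := Nat.cast_ne_zero.2 (by omega)
    field_simp
    ring
  -- ψ-value at vHn n
  have hψval : ∀ n : ℕ, nhat < n →
      (∫ v in (0:ℝ)..(vHn n), F v) - 1 * F (vHn n) * (vHn n - r)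
        = -(1/n) * (F (vHn n) * (vHn n - r)) := by
    intro n hn
    have h := (hmain n hn).2.1
    have hn0 : ((n:ℝ)) ≠ 0 := Nat.cast_ne_zero.2 (by omega)
    rw [h]; field_simp; ring
  have hgt : ∀ n : ℕ, nhat < n → vinf < vHn n := by
    intro n hn
    obtain ⟨-, hrvH, hvH1, -⟩ := hpair n (by omega)
    have hFw : 0 < F (vHn n) := hFpos _ ⟨lt_trans hr0 hrvH, hvH1⟩
    have hn0 : (0:ℝ) < (n:ℝ) := by exact_mod_cast (by omega : 0 < n)
    have hψn : (∫ v in (0:ℝ)..(vHn n), F v) - 1 * F (vHn n) * (vHn n - r) < 0 := by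
      rw [hψval n hn]
      have : 0 < F (vHn n) * (vHn n - r) := mul_pos hFw (by linarith)
      have h1 : 0 < (1:ℝ)/n := by positivity
      nlinarith
    by_contra hle
    push_neg at hle
    rcases eq_or_lt_of_le hle with h | h
    · rw [h] at hψn; linarith
    · have := hanti1 (show vHn n ∈ Icc r 1 from ⟨hrvH.le, hvH1⟩)
        (show vinf ∈ Icc r 1 from ⟨hvinfIoo.1.le, hvinfIoo.2.le⟩) h
      simp only [] at this
      linarith
  have hvinf_in : vinf ∈ Icc (0:ℝ) 1 := hvinf01
  have hanti_c : ∀ n : ℕ, nhat < n → StrictAntiOn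
      (fun w => (∫ v in (0:ℝ)..w, F v) - ((n:ℝ)-1)/n * F w * (w - r))
      (Icc vinf 1) := by
    intro n hn
    obtain ⟨-, hn2m, hn2⟩ := hbig n hn
    apply psi_strictAnti hf_cont hFc hFd _ r hvinf_in
    intro w hw
    have hw01 : w ∈ Icc (0:ℝ) 1 := ⟨le_trans hvinf_in.1 hw.1.le, hw.2.le⟩
    have hfw : mf ≤ f w := hx₀min w hw01
    have hFw1 : F w ≤ 1 := hFle1 w hw01
    have hFwnn : 0 ≤ F w := hFnn w hw01
    have hn0 : (0:ℝ) < (n:ℝ) := by exact_mod_cast (by omega : 0 < n)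
    have hn2' : (2:ℝ) ≤ (n:ℝ) := by exact_mod_cast hn2
    set c : ℝ := ((n:ℝ)-1)/n with hcdef
    have hc : c = 1 - 1/n := by rw [hcdef]; field_simp
    have h1 : m ≤ f w * (w - r) := by
      have hwr : vinf - r ≤ w - r := by linarith [hw.1]
      have : 0 ≤ vinf - r := by linarith [hvinfIoo.1]
      nlinarith
    have h2 : (1:ℝ)/n < m/2 := by
      rw [div_lt_iff₀ hmpos] at hn2m
      rw [div_lt_div_iff₀ hn0 two_pos]
      nlinarith
    have hcge : (1:ℝ)/2 ≤ c := by
      rw [hcdef, le_div_iff₀ hn0]; linarith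
    have h3 : (1/2) * m ≤ c * (f w * (w - r)) :=
      mul_le_mul hcge h1 hmpos.le (by linarith)
    have h4 : (1 - c) * F w ≤ 1/n := by
      have h5 : (1 - c) = 1/n := by rw [hc]; ring
      rw [h5]
      have := mul_le_mul_of_nonneg_left hFw1 (by positivity : (0:ℝ) ≤ 1/n)
      linarith
    calc F w - c * (f w * (w - r) + F w)
        = (1 - c) * F w - c * (f w * (w - r)) := by ring
      _ ≤ 1/n - (1/2) * m := by linarith
      _ < 0 := by linarith
  -- package conclusions
  refine ⟨hmain, ?_, ?_⟩
  · -- strict monotonicity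
    intro n n' hn hnn'
    have hn' : nhat < n' := lt_trans hn hnn'
    have h_n := (hmain n hn).2.1
    have h_n' := (hmain n' hn').2.1
    obtain ⟨-, hrvH, hvH1, -⟩ := hpair n (by omega)
    obtain ⟨-, hrvH', hvH1', -⟩ := hpair n' (by omega)
    have hmemw : vHn n ∈ Icc vinf 1 := ⟨(hgt n hn).le, hvH1⟩
    have hmemw' : vHn n' ∈ Icc vinf 1 := ⟨(hgt n' hn').le, hvH1'⟩
    have hn0 : (0:ℝ) < (n:ℝ) := by exact_mod_cast (by omega : 0 < n)
    have hn'0 : (0:ℝ) < (n':ℝ) := by exact_mod_cast (by omega : 0 < n')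
    have hclt : ((n:ℝ)-1)/n < ((n':ℝ)-1)/n' := by
      rw [div_lt_div_iff₀ hn0 hn'0]
      have : (n:ℝ) < (n':ℝ) := by exact_mod_cast hnn'
      nlinarith
    have hFw' : 0 < F (vHn n') := hFpos _ ⟨lt_trans hr0 hrvH', hvH1'⟩
    have hval0 : (∫ v in (0:ℝ)..(vHn n), F v)
        - ((n:ℝ)-1)/n * F (vHn n) * (vHn n - r) = 0 := by rw [h_n]; ring
    have hvalpos : 0 < (∫ v in (0:ℝ)..(vHn n'), F v)
        - ((n:ℝ)-1)/n * F (vHn n') * (vHn n' - r) := by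
      rw [h_n']
      have : 0 < F (vHn n') * (vHn n' - r) := mul_pos hFw' (by linarith)
      nlinarith
    by_contra hcon
    push_neg at hcon
    rcases eq_or_lt_of_le hcon with h | h
    · rw [← h] at hvalpos; linarith
    · have := hanti_c n hn hmemw hmemw' h
      simp only [] at this
      linarith
  · -- convergence
    refine ⟨vinf, hvinfIoo, (hconv vinf hvinfIoo).2 hvinf0, ?_, ?_⟩
    · intro w hw hrat
      have hw0 := (hconv w hw).1 hrat
      exact hanti1.injOn (show w ∈ Icc r 1 from ⟨hw.1.le, hw.2.le⟩)
        (show vinf ∈ Icc r 1 from ⟨hvinfIoo.1.le, hvinfIoo.2.le⟩)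
        (by rw [hw0, hvinf0])
    · rw [tendsto_order]
      constructor
      · intro a ha
        filter_upwards [eventually_gt_atTop nhat] with n hn
        exact lt_trans ha (hgt n hn)
      · intro b hb
        rcases le_or_gt b 1 with hb1 | hb1
        · -- b ∈ (vinf, 1]
          have hbIcc : b ∈ Icc r 1 := ⟨le_trans hvinfIoo.1.le hb.le, hb1⟩
          have hψb : (∫ v in (0:ℝ)..b, F v) - 1 * F b * (b - r) < 0 := by
            have := hanti1 (show vinf ∈ Icc r 1 from ⟨hvinfIoo.1.le, hvinfIoo.2.le⟩)
              hbIcc hb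
            simp only [] at this
            linarith
          set εb : ℝ := -((∫ v in (0:ℝ)..b, F v) - 1 * F b * (b - r)) with hεb
          have hεbpos : 0 < εb := by rw [hεb]; linarith
          filter_upwards [eventually_gt_atTop nhat,
            eventually_gt_atTop (Nat.ceil εb⁻¹)] with n hn hnε
          obtain ⟨-, hrvH, hvH1, -⟩ := hpair n (by omega)
          have hn0 : (0:ℝ) < (n:ℝ) := by exact_mod_cast (by omega : 0 < n)
          have hinv : εb⁻¹ < (n:ℝ) :=
            lt_of_le_of_lt (Nat.le_ceil _) (by exact_mod_cast hnε)
          have hsmall : (1:ℝ)/n < εb := by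
            rw [div_lt_iff₀ hn0]
            have h1 : εb⁻¹ * εb = 1 := inv_mul_cancel₀ hεbpos.ne'
            nlinarith
          have hbnd : F (vHn n) * (vHn n - r) ≤ 1 := by
            have hF1' : F (vHn n) ≤ 1 := hFle1 _ ⟨le_trans hr0.le hrvH.le, hvH1⟩
            have hFnn' : 0 ≤ F (vHn n) := hFnn _ ⟨le_trans hr0.le hrvH.le, hvH1⟩
            nlinarith
          have hψn : -(1/n) * (F (vHn n) * (vHn n - r))
              ≥ -(1/n) := by
            have h1 : 0 < (1:ℝ)/n := by positivity
            nlinarith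
          have hgtb : (∫ v in (0:ℝ)..(vHn n), F v) - 1 * F (vHn n) * (vHn n - r)
              > (∫ v in (0:ℝ)..b, F v) - 1 * F b * (b - r) := by
            rw [hψval n hn]
            have : -εb < -(1/n) := by linarith
            calc (∫ v in (0:ℝ)..b, F v) - 1 * F b * (b - r) = -εb := by rw [hεb]; ring
            _ < -(1/n) := this
            _ ≤ -(1/n) * (F (vHn n) * (vHn n - r)) := hψn
          by_contra hcon
          push_neg at hcon
          rcases eq_or_lt_of_le hcon with h | h
          · rw [h] at hgtb; linarith
          · have := hanti1 hbIcc (show vHn n ∈ Icc r 1 from ⟨hrvH.le, hvH1⟩) h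
            simp only [] at this
            linarith
        · filter_upwards [eventually_gt_atTop nhat] with n hn
          exact lt_trans (hmain n hn).1 hb1
end
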